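/- arXiv:1105.6243 — 11 statements merged into one kernel-verified Lean document; each statement's English description precedes it below -/
import Mathlib

section
/- Let (F, E, L) be a σ-admissible triple, where L = ∏_{l ∈ ℤ/d} L_l is a finite product of fields with an injective ring endomorphism σ satisfying σ(L_l) ⊆ L_{l+1}, E ⊆ L is a σ-stable subfield, and F = E^σ = L^σ. Let M be a φ-module over E and let μ₁, …, μ_m be elements of V(M) := (L ⊗_E M)^φ (where φ acts on L ⊗_E M by σ ⊗ φ). If μ₁, …, μ_m are linearly independent over F, then they are linearly independent over L inside L ⊗_E M. -/
open scoped TensorProduct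

/-!
STATEMENT 1: Let (F, E, L) be a σ-admissible triple, where L = ∏_{l ∈ ℤ/d} L_l is a finite
product of fields with an injective ring endomorphism σ satisfying σ(L_l) ⊆ L_{l+1},
E ⊆ L a σ-stable subfield, F = E^σ = L^σ, and L/E separable.  Let M be a φ-module over E
and μ₁, …, μ_m ∈ V(M) = (L ⊗_E M)^φ.  If μ₁, …, μ_m are linearly independent over F, then
they are linearly independent over L inside L ⊗_E M.
-/

set_option maxHeartbeats 1000000 in
theorem stmt1
    -- the σ-admissible triple (F, E, L)
    (d : ℕ) [NeZero d] (Ll : ZMod d → Type) [∀ l, Field (Ll l)]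
    (E : Type) [Field E] [∀ l, Algebra E (Ll l)]
    (σL : (∀ l, Ll l) →+* (∀ l, Ll l)) (hσLinj : Function.Injective σL)
    (σE : E →+* E)
    (hσcomp : ∀ e : E, σL (algebraMap E (∀ l, Ll l) e) = algebraMap E (∀ l, Ll l) (σE e))
    (hshift : ∀ (x : ∀ l, Ll l) (l : ZMod d), (∀ k, k ≠ l → x k = 0) →
        ∀ m, m ≠ l + 1 → σL x m = 0)
    (F : Type) [Field F] [Algebra F E]
    (hEfix : ∀ e : E, σE e = e ↔ ∃ f : F, algebraMap F E f = e)
    (hLfix : ∀ x : ∀ l, Ll l, σL x = x ↔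
        ∃ f : F, algebraMap E (∀ l, Ll l) (algebraMap F E f) = x)
    [∀ l, Algebra.IsSeparable E (Ll l)]
    -- a φ-module M over E
    (M : Type) [AddCommGroup M] [Module E M]
    (φ : M →+ M) (hφ : ∀ (e : E) (x : M), φ (e • x) = σE e • φ x)
    -- the σ ⊗ φ action on L ⊗[E] M
    (φT : (∀ l, Ll l) ⊗[E] M →+ (∀ l, Ll l) ⊗[E] M)
    (hφT : ∀ (x : ∀ l, Ll l) (y : M), φT (x ⊗ₜ[E] y) = σL x ⊗ₜ[E] φ y)
    -- elements of V(M)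
    (m : ℕ) (μ : Fin m → (∀ l, Ll l) ⊗[E] M)
    (hμ : ∀ i, φT (μ i) = μ i)
    -- linearly independent over F
    (hind : ∀ c : Fin m → F, (∑ i, algebraMap F E (c i) • μ i) = 0 → ∀ i, c i = 0) :
    -- then linearly independent over L
    ∀ c : Fin m → (∀ l, Ll l), (∑ i, c i • μ i) = 0 → ∀ i, c i = 0 := by
  classical
  -- semilinearity of φT over L
  have φT_smul : ∀ (x : ∀ l, Ll l) (t : (∀ l, Ll l) ⊗[E] M), φT (x • t) = σL x • φT t := by
    intro x t
    induction t using TensorProduct.induction_on with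
    | zero => simp
    | tmul a b =>
        rw [TensorProduct.smul_tmul', smul_eq_mul, hφT, hφT, map_mul, ← smul_eq_mul,
          ← TensorProduct.smul_tmul']
    | add s t hs ht => rw [smul_add, map_add, hs, ht, map_add, smul_add]
  have σ0 : ∀ k : ℕ, σL^[k] (0 : ∀ l, Ll l) = 0 := by
    intro k; induction k with
    | zero => rfl
    | succ k ih => rw [Function.iterate_succ_apply', ih, map_zero]
  have rel_iter : ∀ (k : ℕ) (a : Fin m → ∀ l, Ll l),
      (∑ i, a i • μ i) = 0 → (∑ i, (σL^[k] (a i)) • μ i) = 0 := by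
    intro k
    induction k with
    | zero => intro a h; simpa using h
    | succ k ih =>
        intro a h
        have h1 := ih a h
        have h2 : φT (∑ i, (σL^[k] (a i)) • μ i) = 0 := by rw [h1, map_zero]
        rw [map_sum] at h2
        simp only [φT_smul, hμ] at h2
        simpa [Function.iterate_succ_apply'] using h2
  have supp_iter : ∀ (k : ℕ) (l : ZMod d) (x : ∀ l, Ll l),
      (∀ j, j ≠ l → x j = 0) → ∀ j, j ≠ l + (k : ZMod d) → σL^[k] x j = 0 := by
    intro k
    induction k with
    | zero => intro l x hx j hj; exact hx j (by simpa using hj)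
    | succ k ih =>
        intro l x hx j hj
        rw [Function.iterate_succ_apply']
        refine hshift _ (l + (k : ZMod d)) (ih l x hx) j ?_
        intro h; apply hj; rw [h]; push_cast; ring
  have hone : ∀ l : ZMod d, (Pi.single l 1 : ∀ l, Ll l) ≠ 0 := by
    intro l h
    have h2 := congrFun h l
    simp at h2
  have σsingle : ∀ j : ZMod d,
      σL (Pi.single j 1) = (Pi.single (j + 1) 1 : ∀ l, Ll l) := by
    intro j
    have hsupp : ∀ k, k ≠ j + 1 → σL (Pi.single j (1 : Ll j)) k = 0 := by
      intro k hk
      exact hshift _ j (fun k hk => Pi.single_eq_of_ne hk 1) k hk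
    have hidem : σL (Pi.single j (1 : Ll j)) * σL (Pi.single j (1 : Ll j))
        = σL (Pi.single j (1 : Ll j)) := by
      rw [← map_mul]
      congr 1
      funext k
      by_cases h : k = j
      · subst h; simp
      · simp [Pi.single_eq_of_ne h]
    have h2 : σL (Pi.single j (1 : Ll j)) (j + 1) * σL (Pi.single j (1 : Ll j)) (j + 1)
        = σL (Pi.single j (1 : Ll j)) (j + 1) := by
      have := congrFun hidem (j + 1); simpa using this
    by_cases hz : σL (Pi.single j (1 : Ll j)) (j + 1) = 0
    · exfalso
      have hw0 : σL (Pi.single j (1 : Ll j)) = 0 := by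
        funext k
        by_cases hk : k = j + 1
        · subst hk; exact hz
        · exact hsupp k hk
      have h3 : (Pi.single j (1 : Ll j) : ∀ l, Ll l) = 0 := by
        apply hσLinj
        rw [map_zero, hw0]
      exact hone j h3
    · have h1 : σL (Pi.single j (1 : Ll j)) (j + 1) = 1 :=
        mul_left_cancel₀ hz (by rw [h2, mul_one])
      funext k
      by_cases hk : k = j + 1
      · subst hk; rw [h1, Pi.single_eq_same]
      · rw [hsupp k hk, Pi.single_eq_of_ne hk]
  have σsingle_iter : ∀ (k : ℕ) (j : ZMod d),
      σL^[k] (Pi.single j 1) = (Pi.single (j + (k : ZMod d)) 1 : ∀ l, Ll l) := by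
    intro k
    induction k with
    | zero =>
        intro j
        have heq : j + ((0 : ℕ) : ZMod d) = j := by push_cast; ring
        rw [heq, Function.iterate_zero_apply]
    | succ k ih =>
        intro j
        have heq : j + (k : ZMod d) + 1 = j + ((k + 1 : ℕ) : ZMod d) := by push_cast; ring
        rw [Function.iterate_succ_apply', ih j, σsingle, heq]
  -- main claim: no nontrivial relation supported on one component
  have main : ∀ n : ℕ, ∀ (l : ZMod d) (a : Fin m → ∀ l, Ll l),
      (Finset.univ.filter (fun i => a i ≠ 0)).card = n →
      (∀ i, ∀ k, k ≠ l → a i k = 0) →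
      (∑ i, a i • μ i) = 0 → ∀ i, a i = 0 := by
    intro n
    induction n using Nat.strong_induction_on with
    | _ n IH =>
    intro l a hcard hsupp hrel
    by_contra hcon
    push_neg at hcon
    obtain ⟨i₀, hi₀⟩ := hcon
    have hl0 : a i₀ l ≠ 0 := by
      intro h
      apply hi₀
      funext k
      by_cases hk : k = l
      · subst hk; exact h
      · exact hsupp i₀ k hk
    set u : ∀ l, Ll l := Pi.single l (a i₀ l)⁻¹ with hu
    set c₁ : Fin m → ∀ l, Ll l := fun i => u * a i with hc₁
    have hc₁supp : ∀ i, ∀ k, k ≠ l → c₁ i k = 0 := by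
      intro i k hk
      simp only [hc₁, hu, Pi.mul_apply, Pi.single_eq_of_ne hk, zero_mul]
    have hc₁i₀ : c₁ i₀ = (Pi.single l 1 : ∀ l, Ll l) := by
      funext k
      by_cases hk : k = l
      · subst hk
        simp only [hc₁, hu, Pi.mul_apply, Pi.single_eq_same]
        exact inv_mul_cancel₀ hl0
      · rw [hc₁supp i₀ k hk, Pi.single_eq_of_ne hk]
    have hc₁rel : (∑ i, c₁ i • μ i) = 0 := by
      have h1 : (∑ i, c₁ i • μ i) = u • ∑ i, a i • μ i := by
        rw [Finset.smul_sum]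
        exact Finset.sum_congr rfl (fun i _ => mul_smul u (a i) (μ i))
      rw [h1, hrel, smul_zero]
    set c₂ : Fin m → ∀ l, Ll l := fun i => σL^[d] (c₁ i) - c₁ i with hc₂
    have hc₂rel : (∑ i, c₂ i • μ i) = 0 := by
      have hsplit : ∀ i ∈ Finset.univ, c₂ i • μ i = (σL^[d] (c₁ i)) • μ i - c₁ i • μ i := by
        intro i _
        simp only [hc₂]
        exact sub_smul (σL^[d] (c₁ i)) (c₁ i) (μ i)
      rw [Finset.sum_congr rfl hsplit, Finset.sum_sub_distrib, rel_iter d c₁ hc₁rel,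
        hc₁rel, sub_zero]
    have hc₂supp : ∀ i, ∀ k, k ≠ l → c₂ i k = 0 := by
      intro i k hk
      have h1 : σL^[d] (c₁ i) k = 0 :=
        supp_iter d l (c₁ i) (hc₁supp i) k (by simpa [ZMod.natCast_self] using hk)
      simp only [hc₂, Pi.sub_apply, h1, hc₁supp i k hk, sub_zero]
    have hc₂i₀ : c₂ i₀ = 0 := by
      simp only [hc₂, hc₁i₀, σsingle_iter d l]
      rw [show l + ((d : ℕ) : ZMod d) = l by simp [ZMod.natCast_self]]
      exact sub_self _
    have hsub : (Finset.univ.filter (fun i => c₂ i ≠ 0))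
        ⊂ (Finset.univ.filter (fun i => a i ≠ 0)) := by
      constructor
      · intro i hi
        simp only [Finset.mem_filter, Finset.mem_univ, true_and] at hi ⊢
        intro h
        apply hi
        have hz : c₁ i = 0 := by simp only [hc₁, h, mul_zero]
        simp only [hc₂, hz, σ0, sub_zero]
      · intro h
        have hmem : i₀ ∈ Finset.univ.filter (fun i => a i ≠ 0) := by
          simp [hi₀]
        have h1 := h hmem
        simp only [Finset.mem_filter, Finset.mem_univ, true_and] at h1
        exact h1 hc₂i₀
    have hlt : (Finset.univ.filter (fun i => c₂ i ≠ 0)).card < n := by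
      rw [← hcard]; exact Finset.card_lt_card hsub
    have hc₂zero : ∀ i, c₂ i = 0 := IH _ hlt l c₂ rfl hc₂supp hc₂rel
    have hfix : ∀ i, σL^[d] (c₁ i) = c₁ i := by
      intro i
      have h1 := hc₂zero i
      simp only [hc₂] at h1
      exact sub_eq_zero.mp h1
    set y : Fin m → ∀ l, Ll l := fun i => ∑ k ∈ Finset.range d, σL^[k] (c₁ i) with hy
    have hyfix : ∀ i, σL (y i) = y i := by
      intro i
      have e1 : σL (y i) + c₁ i = y i + c₁ i := by
        calc σL (y i) + c₁ i
            = (∑ k ∈ Finset.range d, σL^[k + 1] (c₁ i)) + σL^[0] (c₁ i) := by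
              simp only [hy, map_sum, ← Function.iterate_succ_apply',
                Function.iterate_zero_apply]
          _ = ∑ k ∈ Finset.range (d + 1), σL^[k] (c₁ i) := (Finset.sum_range_succ' (fun k => σL^[k] (c₁ i)) d).symm
          _ = y i + c₁ i := by rw [Finset.sum_range_succ, hfix i]
      exact add_right_cancel e1
    have hmask : ∀ i, (Pi.single l 1 : ∀ l, Ll l) * y i = c₁ i := by
      intro i
      have hterm : ∀ k ∈ Finset.range d,
          (Pi.single l 1 : ∀ l, Ll l) * σL^[k] (c₁ i)
            = if k = 0 then c₁ i else 0 := by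
        intro k hk
        by_cases h0 : k = 0
        · subst h0
          rw [if_pos rfl, Function.iterate_zero_apply]
          funext j
          rw [Pi.mul_apply]
          by_cases hj : j = l
          · subst hj; rw [Pi.single_eq_same, one_mul]
          · rw [Pi.single_eq_of_ne hj, zero_mul, hc₁supp i j hj]
        · rw [if_neg h0]
          funext j
          rw [Pi.mul_apply]
          by_cases hj : j = l
          · subst hj
            have hkd : (k : ZMod d) ≠ 0 := by
              rw [Ne, ZMod.natCast_eq_zero_iff]
              intro hdvd
              have hle := Nat.le_of_dvd (Nat.pos_of_ne_zero h0) hdvd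
              exact absurd (Finset.mem_range.mp hk) (not_lt.mpr hle)
            have hne : j ≠ j + (k : ZMod d) := fun h => hkd (left_eq_add.mp h)
            rw [supp_iter k j (c₁ i) (hc₁supp i) j hne, mul_zero, Pi.zero_apply]
          · rw [Pi.single_eq_of_ne hj, zero_mul, Pi.zero_apply]
      calc (Pi.single l 1 : ∀ l, Ll l) * y i
          = ∑ k ∈ Finset.range d, (Pi.single l 1 : ∀ l, Ll l) * σL^[k] (c₁ i) := by
            simp only [hy, Finset.mul_sum]
        _ = ∑ k ∈ Finset.range d, if k = 0 then c₁ i else 0 :=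
            Finset.sum_congr rfl hterm
        _ = c₁ i := by
            rw [Finset.sum_eq_single_of_mem 0
              (Finset.mem_range.mpr (Nat.pos_of_ne_zero (NeZero.ne d)))
              (fun b _ hb => if_neg hb)]
            exact if_pos rfl
    have hfexists : ∀ i, ∃ f : F, algebraMap E (∀ l, Ll l) (algebraMap F E f) = y i :=
      fun i => (hLfix (y i)).mp (hyfix i)
    choose f hf using hfexists
    set v := ∑ i, y i • μ i with hv
    have hvE : v = ∑ i, algebraMap F E (f i) • μ i := by
      rw [hv]
      refine Finset.sum_congr rfl (fun i _ => ?_)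
      rw [← hf i, algebraMap_smul]
    have hvfix : φT v = v := by
      rw [hv, map_sum]
      exact Finset.sum_congr rfl fun i _ => by rw [φT_smul, hμ, hyfix]
    have hbase : (Pi.single l 1 : ∀ l, Ll l) • v = 0 := by
      rw [hv, Finset.smul_sum]
      have h1 : ∀ i ∈ Finset.univ,
          (Pi.single l 1 : ∀ l, Ll l) • (y i • μ i) = c₁ i • μ i := by
        intro i _
        rw [← mul_smul, hmask]
      rw [Finset.sum_congr rfl h1, hc₁rel]
    have hall : ∀ k : ℕ, (Pi.single (l + (k : ZMod d)) 1 : ∀ l, Ll l) • v = 0 := by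
      intro k
      induction k with
      | zero =>
          have heq : l + ((0 : ℕ) : ZMod d) = l := by push_cast; ring
          rw [heq]; exact hbase
      | succ k ih =>
          have h1 := congrArg φT ih
          rw [φT_smul, hvfix, σsingle, map_zero] at h1
          have heq : l + ((k : ℕ) : ZMod d) + 1 = l + (((k + 1 : ℕ) : ℕ) : ZMod d) := by
            push_cast; ring
          rwa [heq] at h1
    have hallj : ∀ j : ZMod d, (Pi.single j 1 : ∀ l, Ll l) • v = 0 := by
      intro j
      have h1 := hall (j - l).val
      have h2 : l + (((j - l).val : ℕ) : ZMod d) = j := by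
        rw [ZMod.natCast_rightInverse (j - l)]; ring
      rwa [h2] at h1
    have hv0 : v = 0 := by
      have hsum : (∑ j : ZMod d, (Pi.single j 1 : ∀ l, Ll l)) = 1 :=
        Finset.univ_sum_single (1 : ∀ l, Ll l)
      have h1 : ((1 : ∀ l, Ll l)) • v = 0 := by
        rw [← hsum, Finset.sum_smul]
        exact Finset.sum_eq_zero fun j _ => hallj j
      simpa using h1
    have hf0 : ∀ i, f i = 0 := hind f (by rw [← hvE]; exact hv0)
    have hy0 : y i₀ = 0 := by
      rw [← hf i₀, hf0 i₀]
      simp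
    have hfin : c₁ i₀ = 0 := by rw [← hmask i₀, hy0, mul_zero]
    rw [hc₁i₀] at hfin
    exact hone l hfin
  -- conclude
  intro c hrel i
  funext l
  have hsupp : ∀ i', ∀ k, k ≠ l → ((Pi.single l 1 : ∀ l, Ll l) * c i') k = 0 := by
    intro i' k hk
    rw [Pi.mul_apply, Pi.single_eq_of_ne hk, zero_mul]
  have hrel' : (∑ i', ((Pi.single l 1 : ∀ l, Ll l) * c i') • μ i') = 0 := by
    have h1 : (∑ i', ((Pi.single l 1 : ∀ l, Ll l) * c i') • μ i')
        = (Pi.single l 1 : ∀ l, Ll l) • ∑ i', c i' • μ i' := by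
      rw [Finset.smul_sum]
      exact Finset.sum_congr rfl fun i' _ => mul_smul _ _ _
    rw [h1, hrel, smul_zero]
  have happ := main _ l (fun i' => (Pi.single l 1 : ∀ l, Ll l) * c i') rfl hsupp hrel' i
  have h2 := congrFun happ l
  simpa using h2
end

section
/- Let (F, E, L) be a σ-admissible triple, M an L-trivial φ-module over E with E-basis m ∈ Mat_{r×1}(M), Φ ∈ GL_r(E) with φm = Φm, and Ψ ∈ GL_r(L) a fundamental matrix (σ(Ψ) = ΦΨ). Then the entries of the column vector Ψ^{-1}(1 ⊗ m) ∈ Mat_{r×1}(L ⊗_E M) lie in V(M) and form an F-basis of V(M). -/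
/-!
In the `L`-basis `1 ⊗ m` of `L ⊗[E] M`, the map `φ` acts on coordinate row vectors by
`a ↦ σ(a) Φ`. Multiplying by `Ψ` turns this into the plain action of `σ`, because
`σ(a Ψ) = σ(a) Φ Ψ`; so `v` is `φ`-fixed iff its coordinates times `Ψ` lie in `L^σ = F`.
Thus `v ↦ a(v) Ψ` identifies `V(M)` with `F^r`, and the standard basis of `F^r` corresponds
to the rows of `Ψ⁻¹`.
-/

open scoped TensorProduct

open Matrix Module

theorem Matrix.comp_vecMul_eq_self_iff_of_map_eq_mul {L n : Type*} [CommRing L] [Fintype n]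
    [DecidableEq n] (σ : L →+* L) {Φ Ψ Ψinv : Matrix n n L} (hinv : Ψ * Ψinv = 1)
    (hΨ : Ψ.map σ = Φ * Ψ) (a : n → L) : (σ ∘ a) ᵥ* Φ = a ↔ σ ∘ (a ᵥ* Ψ) = a ᵥ* Ψ := by
  have hσ : σ ∘ (a ᵥ* Ψ) = ((σ ∘ a) ᵥ* Φ) ᵥ* Ψ := by
    rw [vecMul_vecMul, ← hΨ]
    exact funext (RingHom.map_vecMul σ Ψ a)
  rw [hσ]
  refine ⟨fun h => by rw [h], fun h => ?_⟩
  have h' := congrArg (· ᵥ* Ψinv) h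
  simpa only [vecMul_vecMul, Matrix.mul_assoc, hinv, Matrix.mul_one, vecMul_one] using h'

section TensorCoordinates

variable {E L M ι : Type*} [CommRing E] [CommRing L] [Algebra E L] [AddCommGroup M] [Module E M]
  [Fintype ι] (b : Basis ι E M)

theorem Algebra.TensorProduct.basis_equivFun_symm_apply (a : ι → L) :
    (Algebra.TensorProduct.basis L b).equivFun.symm a = ∑ j, a j ⊗ₜ[E] b j := by
  simp only [Basis.equivFun_symm_apply, Algebra.TensorProduct.basis_repr_symm_apply']

theorem map_sum_tmul_basis_of_map_tmul (σ : L →+* L) (φ : M →+ M)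
    (Φ : Matrix ι ι E) (hΦ : ∀ i, φ (b i) = ∑ j, Φ i j • b j)
    (φT : L ⊗[E] M →+ L ⊗[E] M) (hφT : ∀ (x : L) (y : M), φT (x ⊗ₜ[E] y) = σ x ⊗ₜ[E] φ y)
    (a : ι → L) :
    φT (∑ j, a j ⊗ₜ[E] b j) = ∑ k, ((σ ∘ a) ᵥ* Φ.map (algebraMap E L)) k ⊗ₜ[E] b k := by
  simp only [map_sum, hφT, hΦ, TensorProduct.tmul_sum, TensorProduct.tmul_smul,
    TensorProduct.smul_tmul', vecMul, dotProduct, TensorProduct.sum_tmul]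
  rw [Finset.sum_comm]
  simp [Algebra.smul_def, mul_comm]

theorem Algebra.TensorProduct.basis_equivFun_map_of_map_tmul (σ : L →+* L) (φ : M →+ M)
    (Φ : Matrix ι ι E) (hΦ : ∀ i, φ (b i) = ∑ j, Φ i j • b j)
    (φT : L ⊗[E] M →+ L ⊗[E] M) (hφT : ∀ (x : L) (y : M), φT (x ⊗ₜ[E] y) = σ x ⊗ₜ[E] φ y)
    (v : L ⊗[E] M) :
    (basis L b).equivFun (φT v) = (σ ∘ (basis L b).equivFun v) ᵥ* Φ.map (algebraMap E L) := by
  conv_lhs => rw [← (basis L b).equivFun.symm_apply_apply v, basis_equivFun_symm_apply,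
    map_sum_tmul_basis_of_map_tmul b σ φ Φ hΦ φT hφT, ← basis_equivFun_symm_apply,
    LinearEquiv.apply_symm_apply]

end TensorCoordinates

theorem Submodule.exists_basis_of_mem_iff_mem_range_algebraMap {F L W ι : Type*} [Field F]
    [CommRing L] [Nontrivial L] [Algebra F L] [AddCommGroup W] [Module F W] [Fintype ι]
    [DecidableEq ι] (V : Submodule F W) (κ : W →ₗ[F] ι → L) (hκ : Function.Injective κ)
    (hV : ∀ v, v ∈ V ↔ ∀ k, κ v k ∈ Set.range (algebraMap F L))
    (w : ι → W) (hw : ∀ i, κ (w i) = Pi.single i 1) :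
    ∃ c : Basis ι F V, ∀ i, (c i : W) = w i := by
  have hκ_sum (g : ι → F) : κ (∑ i, g i • w i) = fun k => algebraMap F L (g k) := by
    simp only [map_sum, map_smul, hw, ← Pi.single_smul', Algebra.algebraMap_eq_smul_one]
    exact Finset.univ_sum_single _
  have hw_mem (i : ι) : w i ∈ V := by
    refine (hV _).2 fun k => ⟨Pi.single (M := fun _ => F) i 1 k, ?_⟩
    rcases eq_or_ne k i with rfl | hki <;> simp [*]
  let c (i : ι) : V := ⟨w i, hw_mem i⟩
  have hind : LinearIndependent F c := by
    refine LinearIndependent.of_comp (κ ∘ₗ V.subtype) ?_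
    convert (Pi.basisFun L ι).linearIndependent.restrict_scalars' F
    funext i
    exact (hw i).trans (Pi.basisFun_apply L ι i).symm
  have hspan : ⊤ ≤ Submodule.span F (Set.range c) := by
    rintro v -
    choose g hg using (hV v).1 v.2
    have hv : v = ∑ k, g k • c k := Subtype.ext (hκ (by simp [c, hκ_sum, funext hg]))
    rw [hv]
    exact Submodule.sum_mem _ fun k _ => Submodule.smul_mem _ _ (Submodule.subset_span ⟨k, rfl⟩)
  exact ⟨Basis.mk hind hspan, fun i => by rw [Basis.mk_apply]⟩

theorem exists_basis_fixedPoints_eq_sum_tmul {F E L M ι : Type*} [Field F] [CommRing E]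
    [CommRing L] [Nontrivial L] [Algebra E L] [Algebra F L] [SMulCommClass E F L]
    [AddCommGroup M] [Module E M] [Fintype ι] [DecidableEq ι]
    (σ : L →+* L) (hσ : ∀ x, σ x = x ↔ x ∈ Set.range (algebraMap F L))
    (φ : M →+ M) (b : Basis ι E M) (Φ : Matrix ι ι E) (hΦ : ∀ i, φ (b i) = ∑ j, Φ i j • b j)
    (φT : L ⊗[E] M →+ L ⊗[E] M) (hφT : ∀ (x : L) (y : M), φT (x ⊗ₜ[E] y) = σ x ⊗ₜ[E] φ y)
    (V : Submodule F (L ⊗[E] M)) (hV : ∀ v, v ∈ V ↔ φT v = v)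
    {Ψ Ψinv : Matrix ι ι L} (hinv₁ : Ψ * Ψinv = 1) (hinv₂ : Ψinv * Ψ = 1)
    (hΨ : Ψ.map σ = Φ.map (algebraMap E L) * Ψ) :
    ∃ c : Basis ι F V, ∀ i, (c i : L ⊗[E] M) = ∑ j, Ψinv i j ⊗ₜ[E] b j := by
  let B := Algebra.TensorProduct.basis L b
  let κ : L ⊗[E] M →ₗ[F] ι → L :=
    ((vecMulLinear Ψ) ∘ₗ B.equivFun.toLinearMap).restrictScalars F
  have hκ : Function.Injective κ := by
    intro v v' h
    apply B.equivFun.injective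
    simpa [κ, vecMul_vecMul, hinv₁] using congrArg (· ᵥ* Ψinv) h
  refine V.exists_basis_of_mem_iff_mem_range_algebraMap κ hκ (fun v => ?_) _ (fun i => ?_)
  · rw [hV, ← B.equivFun.injective.eq_iff,
      Algebra.TensorProduct.basis_equivFun_map_of_map_tmul b σ φ Φ hΦ φT hφT,
      comp_vecMul_eq_self_iff_of_map_eq_mul σ hinv₁ hΨ, funext_iff]
    simp only [Function.comp_apply, hσ]
    rfl
  · show B.equivFun (∑ j, Ψinv i j ⊗ₜ[E] b j) ᵥ* Ψ = _
    rw [← Algebra.TensorProduct.basis_equivFun_symm_apply, LinearEquiv.apply_symm_apply]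
    change Ψinv.row i ᵥ* Ψ = _
    rw [← single_one_vecMul, vecMul_vecMul, hinv₂, vecMul_one]

theorem stmt5_general
    -- the σ-admissible triple (F, E, L)
    (d : ℕ) [NeZero d] (Ll : ZMod d → Type) [∀ l, Field (Ll l)]
    (E : Type) [Field E] [∀ l, Algebra E (Ll l)]
    (σL : (∀ l, Ll l) →+* (∀ l, Ll l))
    (F : Type) [Field F] [Algebra F E]
    [Algebra F (∀ l, Ll l)] [IsScalarTower F E (∀ l, Ll l)]
    [SMulCommClass E F (∀ l, Ll l)]
    (hLfix : ∀ x : ∀ l, Ll l, σL x = x ↔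
        ∃ f : F, algebraMap E (∀ l, Ll l) (algebraMap F E f) = x)
    -- an L-trivial φ-module M over E with basis, Φ and fundamental matrix Ψ
    (M : Type) [AddCommGroup M] [Module E M]
    (φ : M →+ M)
    (r : ℕ) (b : Module.Basis (Fin r) E M)
    (Φ : Matrix (Fin r) (Fin r) E)
    (hΦ : ∀ i, φ (b i) = ∑ j, Φ i j • b j)
    (φT : (∀ l, Ll l) ⊗[E] M →+ (∀ l, Ll l) ⊗[E] M)
    (hφT : ∀ (x : ∀ l, Ll l) (y : M), φT (x ⊗ₜ[E] y) = σL x ⊗ₜ[E] φ y)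
    (VM : Submodule F ((∀ l, Ll l) ⊗[E] M))
    (hVM : ∀ v, v ∈ VM ↔ φT v = v)
    (Ψ Ψinv : Matrix (Fin r) (Fin r) (∀ l, Ll l))
    (hinv₁ : Ψ * Ψinv = 1) (hinv₂ : Ψinv * Ψ = 1)
    (hΨ : Ψ.map σL = Φ.map (algebraMap E (∀ l, Ll l)) * Ψ) :
    -- the entries of Ψ⁻¹(1 ⊗ m) lie in V(M) and form an F-basis of V(M)
    (∀ i, φT (∑ j, Ψinv i j ⊗ₜ[E] b j) = ∑ j, Ψinv i j ⊗ₜ[E] b j) ∧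
      ∃ c : Module.Basis (Fin r) F VM,
        ∀ i, (c i : (∀ l, Ll l) ⊗[E] M) = ∑ j, Ψinv i j ⊗ₜ[E] b j := by
  have hσ : ∀ x, σL x = x ↔ x ∈ Set.range (algebraMap F (∀ l, Ll l)) := by
    simpa only [IsScalarTower.algebraMap_apply F E (∀ l, Ll l), Set.mem_range] using hLfix
  obtain ⟨c, hc⟩ :=
    exists_basis_fixedPoints_eq_sum_tmul σL hσ φ b Φ hΦ φT hφT VM hVM hinv₁ hinv₂ hΨ
  exact ⟨fun i => (hVM _).1 (hc i ▸ (c i).2), c, hc⟩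

theorem stmt5
    -- the σ-admissible triple (F, E, L)
    (d : ℕ) [NeZero d] (Ll : ZMod d → Type) [∀ l, Field (Ll l)]
    (E : Type) [Field E] [∀ l, Algebra E (Ll l)]
    (σL : (∀ l, Ll l) →+* (∀ l, Ll l)) (hσLinj : Function.Injective σL)
    (σE : E →+* E)
    (hσcomp : ∀ e : E, σL (algebraMap E (∀ l, Ll l) e) = algebraMap E (∀ l, Ll l) (σE e))
    (hshift : ∀ (x : ∀ l, Ll l) (l : ZMod d), (∀ k, k ≠ l → x k = 0) →
        ∀ m, m ≠ l + 1 → σL x m = 0)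
    (F : Type) [Field F] [Algebra F E]
    [Algebra F (∀ l, Ll l)] [IsScalarTower F E (∀ l, Ll l)]
    [SMulCommClass E F (∀ l, Ll l)]
    (hEfix : ∀ e : E, σE e = e ↔ ∃ f : F, algebraMap F E f = e)
    (hLfix : ∀ x : ∀ l, Ll l, σL x = x ↔
        ∃ f : F, algebraMap E (∀ l, Ll l) (algebraMap F E f) = x)
    [∀ l, Algebra.IsSeparable E (Ll l)]
    -- an L-trivial φ-module M over E with basis, Φ and fundamental matrix Ψ
    (M : Type) [AddCommGroup M] [Module E M]
    (φ : M →+ M) (hφ : ∀ (e : E) (x : M), φ (e • x) = σE e • φ x)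
    (r : ℕ) (b : Module.Basis (Fin r) E M)
    (Φ : Matrix (Fin r) (Fin r) E)
    (hΦ : ∀ i, φ (b i) = ∑ j, Φ i j • b j)
    (φT : (∀ l, Ll l) ⊗[E] M →+ (∀ l, Ll l) ⊗[E] M)
    (hφT : ∀ (x : ∀ l, Ll l) (y : M), φT (x ⊗ₜ[E] y) = σL x ⊗ₜ[E] φ y)
    (VM : Submodule F ((∀ l, Ll l) ⊗[E] M))
    (hVM : ∀ v, v ∈ VM ↔ φT v = v)
    (ιM : ((∀ l, Ll l) ⊗[F] VM) →ₗ[F] ((∀ l, Ll l) ⊗[E] M))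
    (hιM : ∀ (x : ∀ l, Ll l) (v : VM), ιM (x ⊗ₜ[F] v) = x • (v : (∀ l, Ll l) ⊗[E] M))
    -- M is L-trivial
    (htriv : Function.Bijective ιM)
    (Ψ Ψinv : Matrix (Fin r) (Fin r) (∀ l, Ll l))
    (hinv₁ : Ψ * Ψinv = 1) (hinv₂ : Ψinv * Ψ = 1)
    (hΨ : Ψ.map σL = Φ.map (algebraMap E (∀ l, Ll l)) * Ψ) :
    -- the entries of Ψ⁻¹(1 ⊗ m) lie in V(M) and form an F-basis of V(M)
    (∀ i, φT (∑ j, Ψinv i j ⊗ₜ[E] b j) = ∑ j, Ψinv i j ⊗ₜ[E] b j) ∧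
      ∃ c : Module.Basis (Fin r) F VM,
        ∀ i, (c i : (∀ l, Ll l) ⊗[E] M) = ∑ j, Ψinv i j ⊗ₜ[E] b j :=
  stmt5_general d Ll E σL F hLfix M φ r b Φ hΦ φT hφT VM hVM Ψ Ψinv hinv₁ hinv₂ hΨ
end

section
/- Let (F, E, L) be a σ-admissible triple with E a field. If M is a finite-dimensional φ-module over E that is L-trivial, then M is étale: the linearization φ_σ : E ⊗_{σ,E} M → M is bijective. Equivalently, if φm = Φm for an E-basis m, then det Φ ≠ 0. -/
open Module TensorProduct

/-!
If `det Φ = 0`, a nonzero vector in the kernel of `Φ` gives a nonzero functional `g` on `M` that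
kills every `φ (b i)`, hence, by semilinearity, the whole image of `φ`. Its base change to
`L ⊗[E] M` then kills the image of `φ_L`, in particular every `φ_L`-invariant vector. By
`L`-triviality the invariants span `L ⊗[E] M` over `L`, so the base change of `g` vanishes,
which forces `g = 0`.
-/

theorem Module.Basis.dual_apply_semilinear_eq_zero {R M ι : Type*} [CommSemiring R]
    [AddCommMonoid M] [Module R M] [Fintype ι] {σ : R →+* R} (b : Basis ι R M) (φ : M →+ M)
    (hφ : ∀ (e : R) (x : M), φ (e • x) = σ e • φ x) (g : Dual R M)
    (hg : ∀ i, g (φ (b i)) = 0) (m : M) : g (φ m) = 0 := by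
  rw [← b.sum_repr m, map_sum, map_sum]
  simp [hφ, hg]

theorem Module.Basis.exists_dual_ne_zero_of_det_eq_zero {R M : Type*} [CommRing R] [IsDomain R]
    [AddCommGroup M] [Module R M] {r : ℕ} (b : Basis (Fin r) R M)
    {Φ : Matrix (Fin r) (Fin r) R} (h : Φ.det = 0) :
    ∃ g : Dual R M, g ≠ 0 ∧ ∀ i, g (∑ j, Φ i j • b j) = 0 := by
  obtain ⟨c, hc, hΦc⟩ := Matrix.exists_mulVec_eq_zero_iff.mpr h
  refine ⟨∑ j, c j • b.coord j, fun hg => hc (funext fun k => ?_), fun i => ?_⟩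
  · simpa [Finsupp.single_apply] using LinearMap.congr_fun hg (b k)
  · simpa [Matrix.mulVec, dotProduct, Finsupp.single_apply, mul_comm] using congr_fun hΦc i

theorem det_ne_zero_of_span_one_tmul_eq_top {E M : Type*} [Field E] [AddCommGroup M]
    [Module E M] (L : Type*) [CommRing L] [Algebra E L] [Nontrivial L]
    {σ : E →+* E} (φ : M →+ M) (hφ : ∀ (e : E) (x : M), φ (e • x) = σ e • φ x)
    {r : ℕ} (b : Basis (Fin r) E M) (Φ : Matrix (Fin r) (Fin r) E)
    (hΦ : ∀ i, φ (b i) = ∑ j, Φ i j • b j)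
    (hspan : Submodule.span L (Set.range fun m => (1 : L) ⊗ₜ[E] φ m) = ⊤) :
    Φ.det ≠ 0 := by
  intro hdet
  obtain ⟨g, hg0, hgΦ⟩ := b.exists_dual_ne_zero_of_det_eq_zero hdet
  have hgφ : ∀ m, g (φ m) = 0 :=
    b.dual_apply_semilinear_eq_zero φ hφ g fun i => hΦ i ▸ hgΦ i
  have hgL : g.baseChange L = 0 := LinearMap.ext_on_range hspan fun m => by simp [hgφ]
  refine hg0 (LinearMap.ext fun m => ?_)
  simpa using LinearMap.congr_fun hgL (1 ⊗ₜ m)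

theorem Submodule.span_eq_top_of_surjective_tensor {F L N : Type*} [CommSemiring F] [Semiring L]
    [Algebra F L] [AddCommMonoid N] [Module L N] [Module F N] (V : Submodule F N)
    (ι : L ⊗[F] V →ₗ[F] N) (hι : ∀ (x : L) (v : V), ι (x ⊗ₜ v) = x • (v : N))
    (hsurj : Function.Surjective ι) : Submodule.span L (V : Set N) = ⊤ := by
  refine eq_top_iff'.2 fun n => ?_
  obtain ⟨u, rfl⟩ := hsurj n
  induction u using TensorProduct.induction_on with
  | zero => simp
  | tmul x v => rw [hι]; exact Submodule.smul_mem _ x (Submodule.subset_span v.2)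
  | add u v hu hv => rw [map_add]; exact add_mem hu hv

theorem map_mem_span_one_tmul_of_map_tmul {E L M : Type*} [CommSemiring E] [CommSemiring L]
    [Algebra E L] [AddCommMonoid M] [Module E M] (φ : M →+ M) (σ : L → L)
    (φL : L ⊗[E] M →+ L ⊗[E] M) (hφL : ∀ (x : L) (y : M), φL (x ⊗ₜ y) = σ x ⊗ₜ φ y)
    (w : L ⊗[E] M) : φL w ∈ Submodule.span L (Set.range fun m => (1 : L) ⊗ₜ[E] φ m) := by
  induction w using TensorProduct.induction_on with
  | zero => simp
  | tmul x y =>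
    rw [hφL, ← mul_one (σ x), ← smul_eq_mul, ← smul_tmul']
    exact Submodule.smul_mem _ _ (Submodule.subset_span ⟨y, rfl⟩)
  | add u v hu hv => rw [map_add]; exact add_mem hu hv

theorem stmt6_general
    -- the σ-admissible triple (F, E, L)
    (d : ℕ) (Ll : ZMod d → Type) [∀ l, Field (Ll l)]
    (E : Type) [Field E] [∀ l, Algebra E (Ll l)]
    (σL : (∀ l, Ll l) →+* (∀ l, Ll l))
    (σE : E →+* E)
    (F : Type) [Field F] [Algebra F E]
    [Algebra F (∀ l, Ll l)]
    [SMulCommClass E F (∀ l, Ll l)]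
    -- a finite-dimensional φ-module M over E with basis and matrix Φ
    (M : Type) [AddCommGroup M] [Module E M]
    (φ : M →+ M) (hφ : ∀ (e : E) (x : M), φ (e • x) = σE e • φ x)
    (r : ℕ) (b : Module.Basis (Fin r) E M)
    (Φ : Matrix (Fin r) (Fin r) E)
    (hΦ : ∀ i, φ (b i) = ∑ j, Φ i j • b j)
    (φT : (∀ l, Ll l) ⊗[E] M →+ (∀ l, Ll l) ⊗[E] M)
    (hφT : ∀ (x : ∀ l, Ll l) (y : M), φT (x ⊗ₜ[E] y) = σL x ⊗ₜ[E] φ y)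
    (VM : Submodule F ((∀ l, Ll l) ⊗[E] M))
    (hVM : ∀ v, v ∈ VM ↔ φT v = v)
    (ιM : ((∀ l, Ll l) ⊗[F] VM) →ₗ[F] ((∀ l, Ll l) ⊗[E] M))
    (hιM : ∀ (x : ∀ l, Ll l) (v : VM), ιM (x ⊗ₜ[F] v) = x • (v : (∀ l, Ll l) ⊗[E] M))
    -- M is L-trivial
    (htriv : Function.Bijective ιM) :
    Φ.det ≠ 0 := by
  refine det_ne_zero_of_span_one_tmul_eq_top (∀ l, Ll l) φ hφ b Φ hΦ (eq_top_iff.2 ?_)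
  rw [← Submodule.span_eq_top_of_surjective_tensor VM ιM hιM htriv.2, Submodule.span_le]
  intro v hv
  rw [← (hVM v).1 hv]
  exact map_mem_span_one_tmul_of_map_tmul φ σL φT hφT v

theorem stmt6
    -- the σ-admissible triple (F, E, L)
    (d : ℕ) [NeZero d] (Ll : ZMod d → Type) [∀ l, Field (Ll l)]
    (E : Type) [Field E] [∀ l, Algebra E (Ll l)]
    (σL : (∀ l, Ll l) →+* (∀ l, Ll l)) (hσLinj : Function.Injective σL)
    (σE : E →+* E)
    (hσcomp : ∀ e : E, σL (algebraMap E (∀ l, Ll l) e) = algebraMap E (∀ l, Ll l) (σE e))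
    (hshift : ∀ (x : ∀ l, Ll l) (l : ZMod d), (∀ k, k ≠ l → x k = 0) →
        ∀ m, m ≠ l + 1 → σL x m = 0)
    (F : Type) [Field F] [Algebra F E]
    [Algebra F (∀ l, Ll l)] [IsScalarTower F E (∀ l, Ll l)]
    [SMulCommClass E F (∀ l, Ll l)]
    (hEfix : ∀ e : E, σE e = e ↔ ∃ f : F, algebraMap F E f = e)
    (hLfix : ∀ x : ∀ l, Ll l, σL x = x ↔
        ∃ f : F, algebraMap E (∀ l, Ll l) (algebraMap F E f) = x)
    [∀ l, Algebra.IsSeparable E (Ll l)]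
    -- a finite-dimensional φ-module M over E with basis and matrix Φ
    (M : Type) [AddCommGroup M] [Module E M]
    (φ : M →+ M) (hφ : ∀ (e : E) (x : M), φ (e • x) = σE e • φ x)
    (r : ℕ) (b : Module.Basis (Fin r) E M)
    (Φ : Matrix (Fin r) (Fin r) E)
    (hΦ : ∀ i, φ (b i) = ∑ j, Φ i j • b j)
    (φT : (∀ l, Ll l) ⊗[E] M →+ (∀ l, Ll l) ⊗[E] M)
    (hφT : ∀ (x : ∀ l, Ll l) (y : M), φT (x ⊗ₜ[E] y) = σL x ⊗ₜ[E] φ y)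
    (VM : Submodule F ((∀ l, Ll l) ⊗[E] M))
    (hVM : ∀ v, v ∈ VM ↔ φT v = v)
    (ιM : ((∀ l, Ll l) ⊗[F] VM) →ₗ[F] ((∀ l, Ll l) ⊗[E] M))
    (hιM : ∀ (x : ∀ l, Ll l) (v : VM), ιM (x ⊗ₜ[F] v) = x • (v : (∀ l, Ll l) ⊗[E] M))
    -- M is L-trivial
    (htriv : Function.Bijective ιM) :
    Φ.det ≠ 0 :=
  stmt6_general d Ll E σL σE F M φ hφ r b Φ hΦ φT hφT VM hVM ιM hιM htriv
end

section
/- Let (F, E, L) be a σ-admissible triple and M, N L-trivial φ-modules over E. Then the natural map V(M) ⊗_F V(N) → V(M ⊗ N) induced by the multiplication (L ⊗_E M) ⊗_L (L ⊗_E N) ≅ L ⊗_E (M ⊗ N) is an isomorphism of F-vector spaces. -/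
open scoped TensorProduct

/-!
Base-changing the two trivialisations gives L-linear isomorphisms
L ⊗_F (V(M) ⊗_F V(N)) ≅ (L ⊗_F V(M)) ⊗_L (L ⊗_F V(N)) ≅ (L ⊗_E M) ⊗_L (L ⊗_E N)
≅ L ⊗_E (M ⊗ N), whose composite sends x ⊗ s to x • θ(s) and hence intertwines σ ⊗ 1
with φ.
Injectivity of θ follows because V ↪ L ⊗_F V over a field. Surjectivity is Galois descent:
a φ-fixed vector of L ⊗_E (M ⊗ N) comes from a (σ ⊗ 1)-fixed tensor, and since
0 → F → L → L, x ↦ σ x - x, is exact and stays exact after tensoring with the flat F-module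
V(M) ⊗_F V(N), such a tensor lies in 1 ⊗ (V(M) ⊗_F V(N)).
-/

theorem LinearMap.coe_liftBaseChange_eq_of_tmul {F L V T : Type*} [CommRing F] [CommRing L]
    [Algebra F L] [AddCommMonoid V] [Module F V] [AddCommMonoid T] [Module F T] [Module L T]
    [IsScalarTower F L T] (j : V →ₗ[F] T) {ι : L ⊗[F] V →ₗ[F] T}
    (hι : ∀ x v, ι (x ⊗ₜ v) = x • j v) : ⇑(j.liftBaseChange L) = ι :=
  congrArg DFunLike.coe (TensorProduct.ext' fun x v => (hι x v).symm :
    (j.liftBaseChange L).restrictScalars F = ι)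

section OverField

variable {F L V : Type*} [Field F] [CommRing L] [Algebra F L] [AddCommMonoid V] [Module F V]

theorem TensorProduct.rTensor_algebraLinearMap_comp_lid_symm :
    (Algebra.linearMap F L).rTensor V ∘ₗ (TensorProduct.lid F V).symm.toLinearMap =
      TensorProduct.mk F L V 1 := by
  ext; simp

theorem TensorProduct.mk_one_injective_of_field [Nontrivial L] :
    Function.Injective (TensorProduct.mk F L V 1) := by
  -- the instance `Module.Flat F V` comes from `Module.Free.of_divisionRing`, stated for groups
  let _ := Module.addCommMonoidToAddCommGroup F (M := V)
  rw [← rTensor_algebraLinearMap_comp_lid_symm]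
  exact (Module.Flat.rTensor_preserves_injective_linearMap _ (algebraMap F L).injective).comp
    (TensorProduct.lid F V).symm.injective

theorem TensorProduct.exists_eq_one_tmul_of_isFixedPt_rTensor (σ : L →ₐ[F] L)
    (hσ : ∀ x, σ x = x → x ∈ Set.range (algebraMap F L)) {t : L ⊗[F] V}
    (ht : Function.IsFixedPt (σ.toLinearMap.rTensor V) t) :
    ∃ v : V, t = (1 : L) ⊗ₜ[F] v := by
  let _ := Module.addCommMonoidToAddCommGroup F (M := V)
  have hexact : Function.Exact (Algebra.linearMap F L)
      (σ.toLinearMap - LinearMap.id (R := F) (M := L)) := by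
    intro x
    refine ⟨fun hx => hσ x (sub_eq_zero.mp hx), ?_⟩
    rintro ⟨f, rfl⟩
    simp
  obtain ⟨s, rfl⟩ := (Module.Flat.rTensor_exact V hexact t).mp <| by
    rw [LinearMap.rTensor_sub, LinearMap.sub_apply, ht, LinearMap.rTensor_id_apply, sub_self]
  exact ⟨TensorProduct.lid F V s, by
    simpa using LinearMap.congr_fun (rTensor_algebraLinearMap_comp_lid_symm (F := F) (L := L))
      (TensorProduct.lid F V s)⟩

end OverField

section Descent

variable {F L V T : Type*} [Field F] [CommRing L] [Algebra F L] [AddCommMonoid V] [Module F V]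
  [AddCommMonoid T] [Module F T] [Module L T] [IsScalarTower F L T]

theorem LinearMap.injective_of_injective_liftBaseChange [Nontrivial L] {j : V →ₗ[F] T}
    (hj : Function.Injective (j.liftBaseChange L)) : Function.Injective j := by
  have hfac : ⇑j = j.liftBaseChange L ∘ TensorProduct.mk F L V 1 :=
    funext fun v => (j.liftBaseChange_one_tmul L v).symm
  rw [hfac]
  exact hj.comp TensorProduct.mk_one_injective_of_field

theorem LinearMap.mem_range_of_isFixedPt (σ : L →ₐ[F] L)
    (hσ : ∀ x, σ x = x → x ∈ Set.range (algebraMap F L))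
    (φ : T →+ T) (hφ : ∀ (x : L) t, φ (x • t) = σ x • φ t)
    {j : V →ₗ[F] T} (hj : ∀ v, φ (j v) = j v)
    (hbij : Function.Bijective (j.liftBaseChange L))
    {t : T} (ht : Function.IsFixedPt φ t) : t ∈ Set.range j := by
  have hcomm : ∀ s, j.liftBaseChange L (σ.toLinearMap.rTensor V s) =
      φ (j.liftBaseChange L s) := by
    intro s
    induction s using TensorProduct.induction_on with
    | zero => simp
    | tmul x v => simp [hφ, hj]
    | add p q hp hq => simp only [map_add, hp, hq]
  obtain ⟨s, rfl⟩ := hbij.2 t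
  have hs : Function.IsFixedPt (σ.toLinearMap.rTensor V) s := hbij.1 (by rw [hcomm, ht])
  obtain ⟨v, rfl⟩ := TensorProduct.exists_eq_one_tmul_of_isFixedPt_rTensor σ hσ hs
  exact ⟨v, (j.liftBaseChange_one_tmul L v).symm⟩

end Descent

section DistribBaseChange

variable {F E L M N V W : Type*} [CommRing F] [CommRing E] [CommRing L] [Algebra F L]
  [Algebra E L] [SMulCommClass E F L] [AddCommMonoid M] [Module E M] [AddCommMonoid N]
  [Module E N] [AddCommMonoid V] [Module F V] [AddCommMonoid W] [Module F W]

open TensorProduct.AlgebraTensorModule in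
theorem LinearMap.bijective_liftBaseChange_tensorProduct {jM : V →ₗ[F] L ⊗[E] M}
    {jN : W →ₗ[F] L ⊗[E] N} (hM : Function.Bijective (jM.liftBaseChange L))
    (hN : Function.Bijective (jN.liftBaseChange L)) {j : V ⊗[F] W →ₗ[F] L ⊗[E] (M ⊗[E] N)}
    (hj : ∀ v w, j (v ⊗ₜ w) = (distribBaseChange E L M N).symm (jM v ⊗ₜ jN w)) :
    Function.Bijective (j.liftBaseChange L) := by
  let Φ := distribBaseChange F L V W ≪≫ₗ
    TensorProduct.congr (.ofBijective _ hM) (.ofBijective _ hN) ≪≫ₗ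
    (distribBaseChange E L M N).symm
  suffices j.liftBaseChange L = Φ.toLinearMap by rw [this]; exact Φ.bijective
  ext v w
  simp [Φ, hj]

theorem TensorProduct.AlgebraTensorModule.distribBaseChange_symm_tmul_eq
    (mul : (L ⊗[E] M) →ₗ[E] (L ⊗[E] N) →ₗ[E] L ⊗[E] (M ⊗[E] N))
    (hmul : ∀ x y x' z, mul (x ⊗ₜ y) (x' ⊗ₜ z) = (x * x') ⊗ₜ (y ⊗ₜ z))
    (u : L ⊗[E] M) (u' : L ⊗[E] N) :
    (distribBaseChange E L M N).symm (u ⊗ₜ u') = mul u u' := by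
  induction u using TensorProduct.induction_on with
  | zero => simp
  | tmul x y =>
    induction u' using TensorProduct.induction_on with
    | zero => simp
    | tmul x' z => simp [hmul]
    | add p q hp hq => simp only [TensorProduct.tmul_add, map_add, hp, hq]
  | add p q hp hq => simp only [TensorProduct.add_tmul, map_add, LinearMap.add_apply, hp, hq]

theorem TensorProduct.map_smul_of_map_tmul_tmul (σ : L →+* L) (f : M → M) (g : N → N)
    (φ : L ⊗[E] (M ⊗[E] N) →+ L ⊗[E] (M ⊗[E] N))
    (hφ : ∀ x y z, φ (x ⊗ₜ (y ⊗ₜ z)) = σ x ⊗ₜ (f y ⊗ₜ g z))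
    (x : L) (u : L ⊗[E] (M ⊗[E] N)) :
    φ (x • u) = σ x • φ u := by
  induction u using TensorProduct.induction_on with
  | zero => simp
  | tmul a m =>
    induction m using TensorProduct.induction_on with
    | zero => simp
    | tmul y z => simp [TensorProduct.smul_tmul', hφ]
    | add p q hp hq => simp only [TensorProduct.tmul_add, smul_add, map_add, hp, hq]
  | add p q hp hq => simp only [smul_add, map_add, hp, hq]

end DistribBaseChange


theorem stmt8_general
    -- the σ-admissible triple (F, E, L)
    (d : ℕ) (Ll : ZMod d → Type) [∀ l, Field (Ll l)]
    (E : Type) [Field E] [∀ l, Algebra E (Ll l)]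
    (σL : (∀ l, Ll l) →+* (∀ l, Ll l))
    (F : Type) [Field F] [Algebra F E]
    [Algebra F (∀ l, Ll l)] [IsScalarTower F E (∀ l, Ll l)]
    [SMulCommClass E F (∀ l, Ll l)]
    (hLfix : ∀ x : ∀ l, Ll l, σL x = x ↔
        ∃ f : F, algebraMap E (∀ l, Ll l) (algebraMap F E f) = x)
    -- two L-trivial φ-modules M and N over E
    (M : Type) [AddCommGroup M] [Module E M]
    (φM : M →+ M)
    (N : Type) [AddCommGroup N] [Module E N]
    (φN : N →+ N)
    (VM : Submodule F ((∀ l, Ll l) ⊗[E] M))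
    (VN : Submodule F ((∀ l, Ll l) ⊗[E] N))
    (ιM : ((∀ l, Ll l) ⊗[F] VM) →ₗ[F] ((∀ l, Ll l) ⊗[E] M))
    (hιM : ∀ (x : ∀ l, Ll l) (v : VM), ιM (x ⊗ₜ[F] v) = x • (v : (∀ l, Ll l) ⊗[E] M))
    (ιN : ((∀ l, Ll l) ⊗[F] VN) →ₗ[F] ((∀ l, Ll l) ⊗[E] N))
    (hιN : ∀ (x : ∀ l, Ll l) (v : VN), ιN (x ⊗ₜ[F] v) = x • (v : (∀ l, Ll l) ⊗[E] N))
    (hMtriv : Function.Bijective ιM) (hNtriv : Function.Bijective ιN)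
    -- the tensor product M ⊗ N with its φ-action σ ⊗ (φ ⊗ φ)
    (φTMN : (∀ l, Ll l) ⊗[E] (M ⊗[E] N) →+ (∀ l, Ll l) ⊗[E] (M ⊗[E] N))
    (hφTMN : ∀ (x : ∀ l, Ll l) (y : M) (z : N),
      φTMN (x ⊗ₜ[E] (y ⊗ₜ[E] z)) = σL x ⊗ₜ[E] (φM y ⊗ₜ[E] φN z))
    (VMN : Submodule F ((∀ l, Ll l) ⊗[E] (M ⊗[E] N)))
    (hVMN : ∀ v, v ∈ VMN ↔ φTMN v = v)
    -- the multiplication map (L ⊗_E M) ⊗_L (L ⊗_E N) → L ⊗_E (M ⊗ N)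
    (mul : ((∀ l, Ll l) ⊗[E] M) →ₗ[E] ((∀ l, Ll l) ⊗[E] N) →ₗ[E]
      ((∀ l, Ll l) ⊗[E] (M ⊗[E] N)))
    (hmul : ∀ (x : ∀ l, Ll l) (y : M) (x' : ∀ l, Ll l) (z : N),
      mul (x ⊗ₜ[E] y) (x' ⊗ₜ[E] z) = (x * x') ⊗ₜ[E] (y ⊗ₜ[E] z))
    -- the natural map V(M) ⊗_F V(N) → V(M ⊗ N)
    (θ : VM ⊗[F] VN →ₗ[F] VMN)
    (hθ : ∀ (v : VM) (w : VN),
      (θ (v ⊗ₜ[F] w) : (∀ l, Ll l) ⊗[E] (M ⊗[E] N)) = mul v w) :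
    Function.Bijective θ := by
  have hF : ∀ f : F, algebraMap E (∀ l, Ll l) (algebraMap F E f) = algebraMap F _ f :=
    fun f => (IsScalarTower.algebraMap_apply F E _ f).symm
  let σ : (∀ l, Ll l) →ₐ[F] (∀ l, Ll l) :=
    { σL with commutes' := fun f => by rw [← hF]; exact (hLfix _).2 ⟨f, rfl⟩ }
  have hσ : ∀ x, σ x = x → x ∈ Set.range (algebraMap F _) := fun x hx => by
    simpa only [hF, Set.mem_range] using (hLfix x).1 hx
  let j := VMN.subtype ∘ₗ θ
  have hbij : Function.Bijective (j.liftBaseChange (∀ l, Ll l)) := by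
    refine LinearMap.bijective_liftBaseChange_tensorProduct (jM := VM.subtype) (jN := VN.subtype)
      ?_ ?_ fun v w => ?_
    · rwa [LinearMap.coe_liftBaseChange_eq_of_tmul VM.subtype hιM]
    · rwa [LinearMap.coe_liftBaseChange_eq_of_tmul VN.subtype hιN]
    · simp [j, hθ, TensorProduct.AlgebraTensorModule.distribBaseChange_symm_tmul_eq mul hmul]
  have hφ := TensorProduct.map_smul_of_map_tmul_tmul σL φM φN φTMN hφTMN
  refine ⟨fun s t hst => LinearMap.injective_of_injective_liftBaseChange hbij.1
    (congrArg Subtype.val hst), fun u => ?_⟩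
  obtain ⟨s, hs⟩ := LinearMap.mem_range_of_isFixedPt σ hσ φTMN hφ
    (fun s => (hVMN _).1 (θ s).2) hbij ((hVMN u).1 u.2)
  exact ⟨s, Subtype.ext hs⟩

theorem stmt8
    -- the σ-admissible triple (F, E, L)
    (d : ℕ) [NeZero d] (Ll : ZMod d → Type) [∀ l, Field (Ll l)]
    (E : Type) [Field E] [∀ l, Algebra E (Ll l)]
    (σL : (∀ l, Ll l) →+* (∀ l, Ll l)) (hσLinj : Function.Injective σL)
    (σE : E →+* E)
    (hσcomp : ∀ e : E, σL (algebraMap E (∀ l, Ll l) e) = algebraMap E (∀ l, Ll l) (σE e))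
    (hshift : ∀ (x : ∀ l, Ll l) (l : ZMod d), (∀ k, k ≠ l → x k = 0) →
        ∀ m, m ≠ l + 1 → σL x m = 0)
    (F : Type) [Field F] [Algebra F E]
    [Algebra F (∀ l, Ll l)] [IsScalarTower F E (∀ l, Ll l)]
    [SMulCommClass E F (∀ l, Ll l)]
    (hEfix : ∀ e : E, σE e = e ↔ ∃ f : F, algebraMap F E f = e)
    (hLfix : ∀ x : ∀ l, Ll l, σL x = x ↔
        ∃ f : F, algebraMap E (∀ l, Ll l) (algebraMap F E f) = x)
    [∀ l, Algebra.IsSeparable E (Ll l)]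
    -- two L-trivial φ-modules M and N over E
    (M : Type) [AddCommGroup M] [Module E M]
    (φM : M →+ M) (hφM : ∀ (e : E) (x : M), φM (e • x) = σE e • φM x)
    (N : Type) [AddCommGroup N] [Module E N]
    (φN : N →+ N) (hφN : ∀ (e : E) (x : N), φN (e • x) = σE e • φN x)
    (φTM : (∀ l, Ll l) ⊗[E] M →+ (∀ l, Ll l) ⊗[E] M)
    (hφTM : ∀ (x : ∀ l, Ll l) (y : M), φTM (x ⊗ₜ[E] y) = σL x ⊗ₜ[E] φM y)
    (φTN : (∀ l, Ll l) ⊗[E] N →+ (∀ l, Ll l) ⊗[E] N)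
    (hφTN : ∀ (x : ∀ l, Ll l) (y : N), φTN (x ⊗ₜ[E] y) = σL x ⊗ₜ[E] φN y)
    (VM : Submodule F ((∀ l, Ll l) ⊗[E] M)) (hVM : ∀ v, v ∈ VM ↔ φTM v = v)
    (VN : Submodule F ((∀ l, Ll l) ⊗[E] N)) (hVN : ∀ v, v ∈ VN ↔ φTN v = v)
    (ιM : ((∀ l, Ll l) ⊗[F] VM) →ₗ[F] ((∀ l, Ll l) ⊗[E] M))
    (hιM : ∀ (x : ∀ l, Ll l) (v : VM), ιM (x ⊗ₜ[F] v) = x • (v : (∀ l, Ll l) ⊗[E] M))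
    (ιN : ((∀ l, Ll l) ⊗[F] VN) →ₗ[F] ((∀ l, Ll l) ⊗[E] N))
    (hιN : ∀ (x : ∀ l, Ll l) (v : VN), ιN (x ⊗ₜ[F] v) = x • (v : (∀ l, Ll l) ⊗[E] N))
    (hMtriv : Function.Bijective ιM) (hNtriv : Function.Bijective ιN)
    [FiniteDimensional E M] [FiniteDimensional E N]
    -- the tensor product M ⊗ N with its φ-action σ ⊗ (φ ⊗ φ)
    (φTMN : (∀ l, Ll l) ⊗[E] (M ⊗[E] N) →+ (∀ l, Ll l) ⊗[E] (M ⊗[E] N))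
    (hφTMN : ∀ (x : ∀ l, Ll l) (y : M) (z : N),
      φTMN (x ⊗ₜ[E] (y ⊗ₜ[E] z)) = σL x ⊗ₜ[E] (φM y ⊗ₜ[E] φN z))
    (VMN : Submodule F ((∀ l, Ll l) ⊗[E] (M ⊗[E] N)))
    (hVMN : ∀ v, v ∈ VMN ↔ φTMN v = v)
    -- the multiplication map (L ⊗_E M) ⊗_L (L ⊗_E N) → L ⊗_E (M ⊗ N)
    (mul : ((∀ l, Ll l) ⊗[E] M) →ₗ[E] ((∀ l, Ll l) ⊗[E] N) →ₗ[E]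
      ((∀ l, Ll l) ⊗[E] (M ⊗[E] N)))
    (hmul : ∀ (x : ∀ l, Ll l) (y : M) (x' : ∀ l, Ll l) (z : N),
      mul (x ⊗ₜ[E] y) (x' ⊗ₜ[E] z) = (x * x') ⊗ₜ[E] (y ⊗ₜ[E] z))
    -- the natural map V(M) ⊗_F V(N) → V(M ⊗ N)
    (θ : VM ⊗[F] VN →ₗ[F] VMN)
    (hθ : ∀ (v : VM) (w : VN),
      (θ (v ⊗ₜ[F] w) : (∀ l, Ll l) ⊗[E] (M ⊗[E] N)) = mul v w) :
    Function.Bijective θ :=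
  stmt8_general d Ll E σL F hLfix M φM N φN VM VN ιM hιM ιN hιN hMtriv hNtriv φTMN hφTMN VMN hVMN
    mul hmul θ hθ
end

section
/- Let G be a group, and let A, B be non-empty subsets of G such that the map ψ : A × A → A × G, (u,v) ↦ (u, u⁻¹v), restricts to a bijection A × A → A × B. Then B is a subgroup of G, A is stable under right multiplication by elements of B, and the right B-action on A is simply transitive (A is a B-torsor). -/
/-!
STATEMENT 10: Let G be a group and A, B non-empty subsets of G such that the map
ψ : A × A → A × G, (u,v) ↦ (u, u⁻¹v), restricts to a bijection A × A → A × B.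
Then B is a subgroup of G, A is stable under right multiplication by B, and A is a
B-torsor (the right B-action on A is simply transitive).
-/

theorem stmt10 {G : Type} [Group G] (A B : Set G)
    (hA : A.Nonempty) (hB : B.Nonempty)
    (hmem : ∀ u ∈ A, ∀ v ∈ A, u⁻¹ * v ∈ B)
    (hsurj : ∀ u ∈ A, ∀ b ∈ B, ∃ v ∈ A, u⁻¹ * v = b) :
    (∃ H : Subgroup G, (H : Set G) = B) ∧
      (∀ a ∈ A, ∀ b ∈ B, a * b ∈ A) ∧
      (∀ a ∈ A, ∀ a' ∈ A, ∃! b, b ∈ B ∧ a * b = a') := by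
  obtain ⟨a₀, ha₀⟩ := hA
  have hstab : ∀ a ∈ A, ∀ b ∈ B, a * b ∈ A := by
    intro a ha b hb
    obtain ⟨v, hv, hve⟩ := hsurj a ha b hb
    have : a * b = v := by rw [← hve]; group
    rwa [this]
  refine ⟨?_, hstab, ?_⟩
  · have h1 : (1:G) ∈ B := by simpa using hmem a₀ ha₀ a₀ ha₀
    have h2 : ∀ b ∈ B, ∀ b' ∈ B, b * b' ∈ B := by
      intro b hb b' hb'
      have := hmem a₀ ha₀ _ (hstab _ (hstab a₀ ha₀ b hb) b' hb')
      simpa [mul_assoc] using this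
    have h3 : ∀ b ∈ B, b⁻¹ ∈ B := by
      intro b hb
      have := hmem _ (hstab a₀ ha₀ b hb) a₀ ha₀
      have e : (a₀ * b)⁻¹ * a₀ = b⁻¹ := by group
      rwa [e] at this
    exact ⟨{ carrier := B, one_mem' := h1,
             mul_mem' := fun ha hb => h2 _ ha _ hb,
             inv_mem' := fun ha => h3 _ ha }, rfl⟩
  · intro a ha a' ha'
    refine ⟨a⁻¹ * a', ⟨hmem a ha a' ha', by group⟩, ?_⟩
    rintro b ⟨hb, rfl⟩
    group
end

section
/- Let G be a group, (A_l)_{l ∈ ℤ/d} and (B_m)_{m ∈ ℤ/d} non-empty subsets of G such that for all l, m the map A_l × A_{l+m} → A_l × G, (u,v) ↦ (u, u⁻¹v), restricts to a bijection onto A_l × B_m. Then B_0 is a subgroup of G, each A_l is a right B_0-torsor, multiplication in G induces maps A_l × B_m → A_{l+m} and B_m × B_{m'} → B_{m+m'}, and inversion in G maps B_m into B_{-m}. -/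
/-!
STATEMENT 11: Let G be a group, d a positive integer, and (A_l)_{l ∈ ℤ/d}, (B_m)_{m ∈ ℤ/d}
non-empty subsets of G such that for all l, m the map A_l × A_{l+m} → A_l × G,
(u,v) ↦ (u, u⁻¹v), restricts to a bijection onto A_l × B_m.  Then B_0 is a subgroup of G,
each A_l is a right B_0-torsor, multiplication in G induces maps A_l × B_m → A_{l+m} and
B_m × B_{m'} → B_{m+m'}, and inversion in G maps B_m into B_{-m}.
-/

theorem stmt11 {G : Type} [Group G] (d : ℕ) [NeZero d]
    (A B : ZMod d → Set G)
    (hA : ∀ l, (A l).Nonempty) (hB : ∀ m, (B m).Nonempty)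
    (hmem : ∀ (l m : ZMod d), ∀ u ∈ A l, ∀ v ∈ A (l + m), u⁻¹ * v ∈ B m)
    (hsurj : ∀ (l m : ZMod d), ∀ u ∈ A l, ∀ b ∈ B m, ∃ v ∈ A (l + m), u⁻¹ * v = b) :
    (∃ H : Subgroup G, (H : Set G) = B 0) ∧
      (∀ l, ∀ a ∈ A l, ∀ b ∈ B 0, a * b ∈ A l) ∧
      (∀ l, ∀ a ∈ A l, ∀ a' ∈ A l, ∃! b, b ∈ B 0 ∧ a * b = a') ∧
      (∀ (l m : ZMod d), ∀ u ∈ A l, ∀ v ∈ A (l + m), ∃ y ∈ B m, v = u * y) ∧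
      (∀ (l m : ZMod d), ∀ a ∈ A l, ∀ b ∈ B m, a * b ∈ A (l + m)) ∧
      (∀ (m m' : ZMod d), ∀ b ∈ B m, ∀ b' ∈ B m', b * b' ∈ B (m + m')) ∧
      (∀ (m : ZMod d), ∀ b ∈ B m, b⁻¹ ∈ B (-m)) := by
  have key : ∀ (l m : ZMod d), ∀ a ∈ A l, ∀ b ∈ B m, a * b ∈ A (l + m) := by
    intro l m a ha b hb
    obtain ⟨v, hv, hvb⟩ := hsurj l m a ha b hb
    have : v = a * b := by rw [← hvb]; group
    rwa [← this]
  have hone : (1 : G) ∈ B 0 := by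
    obtain ⟨a, ha⟩ := hA 0
    have := hmem 0 0 a ha a (by simpa using ha)
    simpa using this
  have hmul : ∀ (m m' : ZMod d), ∀ b ∈ B m, ∀ b' ∈ B m', b * b' ∈ B (m + m') := by
    intro m m' b hb b' hb'
    obtain ⟨a, ha⟩ := hA 0
    have h1 : a * b ∈ A (0 + m) := key 0 m a ha b hb
    have h2 : a * b * b' ∈ A (0 + m + m') := key (0 + m) m' _ h1 b' hb'
    have := hmem 0 (m + m') a ha (a * b * b') (by rw [← add_assoc]; exact h2)
    simpa [mul_assoc] using this
  have hinv : ∀ (m : ZMod d), ∀ b ∈ B m, b⁻¹ ∈ B (-m) := by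
    intro m b hb
    obtain ⟨a, ha⟩ := hA 0
    have h1 : a * b ∈ A (0 + m) := key 0 m a ha b hb
    have := hmem (0 + m) (-m) (a * b) h1 a (by simpa using ha)
    simpa [mul_inv_rev, mul_assoc] using this
  let H : Subgroup G :=
    { carrier := B 0
      mul_mem' := fun hx hy => by simpa using hmul 0 0 _ hx _ hy
      one_mem' := hone
      inv_mem' := fun hx => by simpa using hinv 0 _ hx }
  refine ⟨⟨H, rfl⟩, ?_, ?_, ?_, key, hmul, hinv⟩
  · intro l a ha b hb
    simpa using key l 0 a ha b hb
  · intro l a ha a' ha'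
    refine ⟨a⁻¹ * a', ⟨by simpa using hmem l 0 a ha a' (by simpa using ha'), by group⟩, ?_⟩
    rintro b ⟨hb, hab⟩
    rw [← hab]; group
  · intro l m u hu v hv
    exact ⟨u⁻¹ * v, hmem l m u hu v hv, by group⟩
end

section
/- Let Ω/k be a field extension with Ω algebraically closed, X an affine algebraic variety over k, and Y a closed subvariety of X_Ω. If the set of Ω-points of Y that come from k-points of X is Zariski dense in Y, then Y is defined over k, i.e., the defining ideal of Y in Ω[X] = Ω ⊗_k k[X] is generated by its intersection with k[X]. -/
/-!
The ideal of any set `S` of `k`-points, taken inside `Ω ⊗[k] R`, is generated by elements of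
`R`: expand `f = ∑ bᵢ ⊗ cᵢ` along a `k`-basis `b` of `Ω`; at a `k`-point `x` the value of `f` is
`∑ x(cᵢ) • bᵢ` with coefficients `x(cᵢ) ∈ k`, so `f` vanishes on `S` exactly when every `cᵢ`
does. Density says that `𝔞` is the ideal of the `k`-points lying on `Y`.
-/

open scoped TensorProduct

noncomputable section

variable (k Ω : Type) [Field k] [Field Ω] [Algebra k Ω]
variable (R : Type) [CommRing R] [Algebra k R]

/-- Evaluation of `Ω ⊗[k] R` at a `k`-point `x : R →ₐ[k] k` of `X`, giving the induced
`Ω`-point of `X_Ω`. -/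
def evalPt (x : R →ₐ[k] k) : Ω ⊗[k] R →ₐ[k] Ω :=
  (Algebra.TensorProduct.rid k k Ω).toAlgHom.comp
    (Algebra.TensorProduct.map (AlgHom.id k Ω) x)

lemma evalPt_tmul (x : R →ₐ[k] k) (ω : Ω) (r : R) :
    evalPt k Ω R x (ω ⊗ₜ[k] r) = x r • ω := by
  simp [evalPt]

lemma evalPt_sum_basis_tmul {ι : Type*} (b : Module.Basis ι k Ω) (x : R →ₐ[k] k)
    (c : ι →₀ R) :
    evalPt k Ω R x (c.sum fun i r ↦ b i ⊗ₜ[k] r) =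
      Finsupp.linearCombination k b (c.mapRange x (map_zero x)) := by
  rw [map_finsuppSum, Finsupp.linearCombination_apply,
    Finsupp.sum_mapRange_index (fun i ↦ zero_smul k (b i))]
  simp only [evalPt_tmul]

lemma apply_coeff_eq_zero_of_evalPt_sum_basis_tmul_eq_zero {ι : Type*}
    (b : Module.Basis ι k Ω) (x : R →ₐ[k] k) (c : ι →₀ R)
    (h : evalPt k Ω R x (c.sum fun i r ↦ b i ⊗ₜ[k] r) = 0) (i : ι) : x (c i) = 0 := by
  rw [evalPt_sum_basis_tmul] at h
  have hc : c.mapRange x (map_zero x) = 0 :=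
    linearIndependent_iff.1 b.linearIndependent _ h
  simpa using DFunLike.congr_fun hc i

def pointsIdeal (S : Set (R →ₐ[k] k)) : Ideal (Ω ⊗[k] R) :=
  ⨅ x ∈ S, RingHom.ker (evalPt k Ω R x)

lemma mem_pointsIdeal {S : Set (R →ₐ[k] k)} {f : Ω ⊗[k] R} :
    f ∈ pointsIdeal k Ω R S ↔ ∀ x ∈ S, evalPt k Ω R x f = 0 := by
  simp [pointsIdeal, RingHom.mem_ker]

lemma pointsIdeal_le_span (S : Set (R →ₐ[k] k)) :
    pointsIdeal k Ω R S ≤ Ideal.span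
      {z : Ω ⊗[k] R | ∃ r : R, z = 1 ⊗ₜ[k] r ∧ (1 ⊗ₜ[k] r : Ω ⊗[k] R) ∈ pointsIdeal k Ω R S} := by
  intro f hf
  let b := Module.Basis.ofVectorSpace k Ω
  obtain ⟨c, rfl⟩ := TensorProduct.eq_repr_basis_left b f
  have hcoeff (i) : (1 ⊗ₜ[k] c i : Ω ⊗[k] R) ∈ pointsIdeal k Ω R S := by
    refine (mem_pointsIdeal k Ω R).2 fun x hx ↦ ?_
    rw [evalPt_tmul, apply_coeff_eq_zero_of_evalPt_sum_basis_tmul_eq_zero k Ω R b x c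
      ((mem_pointsIdeal k Ω R).1 hf x hx) i, zero_smul]
  refine Ideal.sum_mem _ fun i _ ↦ ?_
  have hfactor : b i ⊗ₜ[k] c i = (b i ⊗ₜ[k] (1 : R)) * (1 ⊗ₜ[k] c i) := by
    rw [Algebra.TensorProduct.tmul_mul_tmul, mul_one, one_mul]
  show b i ⊗ₜ[k] c i ∈ _
  rw [hfactor]
  exact Ideal.mul_mem_left _ _ (Ideal.subset_span ⟨c i, rfl, hcoeff i⟩)

theorem stmt12
    (𝔞 : Ideal (Ω ⊗[k] R))
    -- Zariski density of X(k) ∩ Y(Ω) in Y: any closed subscheme of Y containing all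
    -- points of X(k) that lie on Y must be Y itself.
    (hdense : ∀ 𝔟 : Ideal (Ω ⊗[k] R), 𝔞 ≤ 𝔟 →
      (∀ x : R →ₐ[k] k, (∀ f ∈ 𝔞, evalPt k Ω R x f = 0) →
        ∀ g ∈ 𝔟, evalPt k Ω R x g = 0) → 𝔟 = 𝔞) :
    𝔞 = Ideal.span {z : Ω ⊗[k] R | ∃ r : R, z = 1 ⊗ₜ[k] r ∧ (1 ⊗ₜ[k] r : Ω ⊗[k] R) ∈ 𝔞} := by
  let S := {x : R →ₐ[k] k | ∀ f ∈ 𝔞, evalPt k Ω R x f = 0}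
  have hS : pointsIdeal k Ω R S = 𝔞 :=
    hdense _ (fun f hf ↦ (mem_pointsIdeal k Ω R).2 fun x hx ↦ hx f hf)
      (fun x hx g hg ↦ (mem_pointsIdeal k Ω R).1 hg x hx)
  refine le_antisymm (hS ▸ pointsIdeal_le_span k Ω R S) (Ideal.span_le.2 ?_)
  rintro _ ⟨r, rfl, hr⟩
  exact hr

end
end

section
/- Let Ω/k be a field extension with Ω algebraically closed and X an algebraic variety over k. If X(k) is Zariski dense in X, then X(k) (viewed in X_Ω(Ω)) is Zariski dense in the base change X_Ω. -/
open scoped TensorProduct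

/-!
Expanding `f ∈ Ω ⊗[k] R` in a `k`-basis `(ωᵢ)` of `Ω` as `f = ∑ ωᵢ ⊗ rᵢ`, its value at a `k`-point
`x` is `∑ x(rᵢ) ωᵢ`. If `f` vanishes at every `k`-point then, by linear independence of the `ωᵢ`,
every `rᵢ` vanishes at every `k`-point, so `rᵢ = 0` by density of `X(k)` in `X`, and `f = 0`.
-/

noncomputable section

variable (k Ω : Type) [Field k] [Field Ω] [Algebra k Ω]
variable (R : Type) [CommRing R] [Algebra k R]

theorem TensorProduct.eq_zero_of_forall_lTensor_eq_zero {A V M N ι : Type*} [CommSemiring A]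
    [AddCommMonoid V] [Module A V] [Module.Free A V] [AddCommMonoid M] [Module A M]
    [AddCommMonoid N] [Module A N] (φ : ι → M →ₗ[A] N) (hφ : ∀ m, (∀ i, φ i m = 0) → m = 0)
    (f : V ⊗[A] M) (hf : ∀ i, (φ i).lTensor V f = 0) : f = 0 := by
  let b := Module.Free.chooseBasis A V
  obtain ⟨c, rfl⟩ := TensorProduct.eq_repr_basis_left b f
  have hc : c = 0 := by
    ext j
    refine hφ _ fun i => ?_
    have hci : c.mapRange (φ i) (map_zero _) = 0 :=
      TensorProduct.sum_tmul_basis_left_eq_zero b _ <| by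
        simpa [Finsupp.sum_mapRange_index, map_finsuppSum] using hf i
    simpa using DFunLike.congr_fun hci j
  simp [hc]

theorem evalPt_eq_rid_lTensor (x : R →ₐ[k] k) (f : Ω ⊗[k] R) :
    evalPt k Ω R x f = TensorProduct.rid k Ω (x.toLinearMap.lTensor Ω f) := by
  induction f with
  | zero => simp
  | tmul ω r => simp [evalPt]
  | add f g hf hg => simp [hf, hg]

theorem eq_zero_of_forall_algHom_eq_zero
    (hdense : ∀ I : Ideal R, (∀ x : R →ₐ[k] k, ∀ f ∈ I, x f = 0) → I = ⊥)
    (r : R) (hr : ∀ x : R →ₐ[k] k, x r = 0) : r = 0 := by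
  have hspan : Ideal.span {r} = ⊥ := hdense _ fun x f hf => by
    obtain ⟨a, rfl⟩ := Ideal.mem_span_singleton'.1 hf
    simp [hr]
  simpa [hspan] using Ideal.mem_span_singleton_self r

theorem stmt13
    -- X(k) is Zariski dense in X: the only closed subscheme of X containing all k-points
    -- is X itself.
    (hdense : ∀ I : Ideal R, (∀ x : R →ₐ[k] k, ∀ f ∈ I, x f = 0) → I = ⊥) :
    -- then X(k) is Zariski dense in X_Ω.
    ∀ J : Ideal (Ω ⊗[k] R), (∀ x : R →ₐ[k] k, ∀ f ∈ J, evalPt k Ω R x f = 0) → J = ⊥ := by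
  intro J hJ
  refine (Submodule.eq_bot_iff J).2 fun f hf => ?_
  refine TensorProduct.eq_zero_of_forall_lTensor_eq_zero (fun x : R →ₐ[k] k => x.toLinearMap)
    (eq_zero_of_forall_algHom_eq_zero k R hdense) f fun x => ?_
  simpa [evalPt_eq_rid_lTensor] using hJ x f hf

end
end

section
/- Let Ω/k be a field extension, X₁ an algebraic variety over Ω, X₂ an algebraic variety over k, and Ω̄ an algebraic closure of Ω. If X₂(k) is Zariski dense in X₂, then the set X₁(Ω̄) × X₂(k) is Zariski dense in the fiber product X₁ ×_Ω X₂,Ω (the base change of X₂ to Ω fibered with X₁). -/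
open scoped TensorProduct

/-!
STATEMENT 14: Let Ω/k be a field extension, X₁ an (affine) algebraic variety over Ω with
coordinate ring R₁, X₂ an (affine) algebraic variety over k with coordinate ring R₂, and
Ω̄ an algebraic closure of Ω.  If X₂(k) is Zariski dense in X₂, then X₁(Ω̄) × X₂(k) is
Zariski dense in the fiber product X₁ ×_Ω X₂,Ω, whose coordinate ring is
R₁ ⊗_Ω (Ω ⊗_k R₂) ≅ R₁ ⊗_k R₂.
-/

noncomputable section

variable (k Ω Ωbar : Type) [Field k] [Field Ω] [Field Ωbar]
variable [Algebra k Ω] [Algebra Ω Ωbar] [Algebra k Ωbar] [IsScalarTower k Ω Ωbar]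
variable (R₁ : Type) [CommRing R₁] [Algebra Ω R₁] [Algebra k R₁] [IsScalarTower k Ω R₁]
variable (R₂ : Type) [CommRing R₂] [Algebra k R₂]

/-- The point of the fiber product `X₁ ×_Ω X₂,Ω` obtained from an `Ω̄`-point `y` of `X₁`
and a `k`-point `x` of `X₂`, as evaluation on the coordinate ring `R₁ ⊗[k] R₂`. -/
def prodPt (y : R₁ →ₐ[Ω] Ωbar) (x : R₂ →ₐ[k] k) : R₁ ⊗[k] R₂ →ₐ[k] Ωbar :=
  Algebra.TensorProduct.productMap (y.restrictScalars k)
    ((Algebra.ofId k Ωbar).comp x)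

/-!
Fix `f ∈ J`. For a `k`-point `x` of `X₂`, the slice `(id ⊗ x) f ∈ R₁` vanishes at every
`Ω̄`-point of `X₁`, so it is zero by the Nullstellensatz, `R₁` being reduced. Writing
`f = ∑ bᵢ ⊗ sᵢ` over a `k`-basis `(bᵢ)` of `R₁`, this slice is `∑ x(sᵢ) bᵢ`; hence every `sᵢ`
vanishes at all `k`-points of `X₂` and is zero by density.
-/

section Nullstellensatz

variable {K L A : Type*} [Field K] [Field L] [IsAlgClosed L] [Algebra K L]
  [CommRing A] [Algebra K A] [Algebra.FiniteType K A]

theorem exists_algHom_ker_eq_of_isMaximal (m : Ideal A) [m.IsMaximal] :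
    ∃ y : A →ₐ[K] L, RingHom.ker y = m := by
  let := Ideal.Quotient.field m
  have := finite_of_finite_type_of_isJacobsonRing K (A ⧸ m)
  have := Algebra.IsAlgebraic.of_finite K (A ⧸ m)
  let y₀ : A ⧸ m →ₐ[K] L := IsAlgClosed.lift
  refine ⟨y₀.comp (Ideal.Quotient.mkₐ K m), ?_⟩
  ext a
  simp [RingHom.mem_ker, map_eq_zero_iff y₀ y₀.toRingHom.injective, Ideal.Quotient.eq_zero_iff_mem]

theorem eq_zero_of_forall_algHom_apply_eq_zero [IsReduced A] {a : A}
    (h : ∀ y : A →ₐ[K] L, y a = 0) : a = 0 := by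
  have : IsJacobsonRing A := isJacobsonRing_of_finiteType (A := K)
  suffices a ∈ (⊥ : Ideal A).jacobson by
    rwa [← Ideal.radical_eq_jacobson, Ideal.radical_bot_of_isReduced] at this
  refine Ideal.mem_sInf.mpr fun m ⟨_, hm⟩ => ?_
  obtain ⟨y, hy⟩ := exists_algHom_ker_eq_of_isMaximal (K := K) (L := L) m
  exact hy ▸ h y

end Nullstellensatz

namespace TensorProduct

variable {R V M : Type*} [CommRing R] [AddCommGroup V] [Module R V] [AddCommGroup M] [Module R M]

theorem equivFinsuppOfBasisLeft_lTensor_apply {ι : Type*} [DecidableEq ι] (b : Module.Basis ι R V)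
    (φ : M →ₗ[R] R) (f : V ⊗[R] M) (i : ι) :
    equivFinsuppOfBasisLeft b (φ.lTensor V f) i = φ (equivFinsuppOfBasisLeft b f i) := by
  induction f using TensorProduct.induction_on with
  | zero => simp
  | tmul v m => simp
  | add f g hf hg => simp [hf, hg]

theorem eq_zero_of_forall_lTensor_eq_zero_s14 [Module.Free R V] {ι : Type*} (φ : ι → Module.Dual R M)
    (hφ : ∀ m, (∀ i, φ i m = 0) → m = 0) {f : V ⊗[R] M} (hf : ∀ i, (φ i).lTensor V f = 0) :
    f = 0 := by
  classical
  let e := equivFinsuppOfBasisLeft (Module.Free.chooseBasis R V) (M := V) (N := M)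
  suffices e f = 0 by simpa using this
  ext j
  refine hφ _ fun i => ?_
  rw [← equivFinsuppOfBasisLeft_lTensor_apply, hf i, map_zero, Finsupp.zero_apply]

end TensorProduct

lemma prodPt_apply (y : R₁ →ₐ[Ω] Ωbar) (x : R₂ →ₐ[k] k) (f : R₁ ⊗[k] R₂) :
    prodPt k Ω Ωbar R₁ R₂ y x f = y (TensorProduct.rid k R₁ (x.toLinearMap.lTensor R₁ f)) := by
  induction f using TensorProduct.induction_on with
  | zero => simp
  | tmul r s => simp [prodPt, Algebra.smul_def, mul_comm]
  | add f g hf hg => simp only [map_add, hf, hg]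

theorem stmt14 [IsAlgClosed Ωbar]
    (hfg₁ : Algebra.FiniteType Ω R₁) [IsReduced R₁]
    (hfg₂ : Algebra.FiniteType k R₂)
    -- X₂(k) is Zariski dense in X₂.
    (hdense : ∀ I : Ideal R₂, (∀ x : R₂ →ₐ[k] k, ∀ f ∈ I, x f = 0) → I = ⊥) :
    -- then X₁(Ω̄) × X₂(k) is Zariski dense in X₁ ×_Ω X₂,Ω.
    ∀ J : Ideal (R₁ ⊗[k] R₂),
      (∀ (y : R₁ →ₐ[Ω] Ωbar) (x : R₂ →ₐ[k] k), ∀ f ∈ J,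
        prodPt k Ω Ωbar R₁ R₂ y x f = 0) → J = ⊥ := by
  intro J hJ
  have hsep : ∀ s : R₂, (∀ x : R₂ →ₐ[k] k, x s = 0) → s = 0 := fun s hs => by
    simpa using hdense (Ideal.span {s}) fun x f hf => by
      obtain ⟨t, rfl⟩ := Ideal.mem_span_singleton'.1 hf
      rw [map_mul, hs x, mul_zero]
  refine eq_bot_iff.2 fun f hf => ?_
  have hslice (x : R₂ →ₐ[k] k) : x.toLinearMap.lTensor R₁ f = 0 :=
    (TensorProduct.rid k R₁).map_eq_zero_iff.1 <|
      eq_zero_of_forall_algHom_apply_eq_zero (K := Ω) (L := Ωbar) fun y => by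
        rw [← prodPt_apply]
        exact hJ y x f hf
  exact TensorProduct.eq_zero_of_forall_lTensor_eq_zero_s14 (fun x : R₂ →ₐ[k] k => x.toLinearMap)
    (fun s hs => hsep s fun x => by simpa using hs x) hslice
end
end

section
/- Let E ⊆ Λ be rings where E is a field and Λ = ∏_{l ∈ ℤ/d'} Λ_l is a finite product of fields, with #E > d'. Let 1 ≤ m ≤ s and D ∈ Mat_{s×m}(Λ) such that D can be completed to an invertible matrix D₀ = [*, D] ∈ GL_s(Λ). Then there exist A ∈ GL_m(Λ) and B ∈ GL_s(E) such that B·D·A has the form whose top m×m block is the identity matrix I_m (and arbitrary entries below). -/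
/-!
Write `D_l` for the components of `D`. Since `D` is a column block of an invertible matrix, each
`D_l` has a left inverse, so the `E`-linear maps `ψ_l : u ↦ u ⬝ D_l` from `E^s` to `Λ_l^m` have
`Λ_l`-spanning images. One chooses `v_1, …, v_m ∈ E^s` one at a time so that every family
`ψ_l(v_1), …, ψ_l(v_k)` stays `Λ_l`-independent: the vectors `u` spoiling this for a given `l` form
a proper `E`-subspace, and `E^s` is not a union of `d' < #E` proper subspaces. The `v_i` are then
`E`-independent, so they are the top rows of some `B ∈ GL_s(E)`; the top `m × m` block `M` of
`B D` is invertible in each component, and `A = M⁻¹` works.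
-/

open Module Submodule Set

section SimultaneousExtension

variable {K V ν : Type*} [Field K] [AddCommGroup V] [Module K V] [Fintype ν]
  {F : ν → Type*} [∀ l, Field (F l)] [∀ l, Algebra K (F l)]
  {M : ν → Type*} [∀ l, AddCommGroup (M l)] [∀ l, Module (F l) (M l)] [∀ l, Module K (M l)]
  [∀ l, IsScalarTower K (F l) (M l)]
  (ψ : ∀ l, V →ₗ[K] M l)

theorem exists_forall_linearIndependent_comp_snoc (hcard : Fintype.card ν < ENat.card K)
    (hψ : ∀ l, span (F l) (range (ψ l)) = ⊤) {n : ℕ} (hn : ∀ l, n < finrank (F l) (M l))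
    {v : Fin n → V} (hv : ∀ l, LinearIndependent (F l) (ψ l ∘ v)) :
    ∃ u : V, ∀ l, LinearIndependent (F l) (ψ l ∘ Fin.snoc v u) := by
  let W : ν → Submodule K V := fun l =>
    ((span (F l) (range (ψ l ∘ v))).restrictScalars K).comap (ψ l)
  have hW : ∀ l, W l ≠ ⊤ := by
    intro l hWl
    have hspan : span (F l) (range (ψ l ∘ v)) = ⊤ := by
      rw [eq_top_iff, ← hψ l, span_le]
      rintro _ ⟨u, rfl⟩
      exact (hWl ▸ mem_top : u ∈ W l)
    have := finrank_span_eq_card (hv l)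
    rw [hspan, finrank_top, Fintype.card_fin] at this
    exact (hn l).ne this.symm
  obtain ⟨u, hu⟩ : ∃ u, u ∉ ⋃ l ∈ Finset.univ, (W l : Set V) := by
    simpa [ssubset_univ_iff, eq_univ_iff_forall] using
      iUnion_ssubset_of_forall_ne_top_of_card_lt Finset.univ W hW hcard
  refine ⟨u, fun l => ?_⟩
  rw [Fin.comp_snoc, linearIndependent_finSnoc]
  exact ⟨hv l, fun h => hu (mem_biUnion (Finset.mem_univ l) h)⟩

theorem exists_forall_linearIndependent_comp_extension (hcard : Fintype.card ν < ENat.card K)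
    (hψ : ∀ l, span (F l) (range (ψ l)) = ⊤) {k n : ℕ} (hkn : k ≤ n)
    (hn : ∀ l, n ≤ finrank (F l) (M l))
    {v₀ : Fin k → V} (hv₀ : ∀ l, LinearIndependent (F l) (ψ l ∘ v₀)) :
    ∃ v : Fin n → V, v ∘ Fin.castLE hkn = v₀ ∧ ∀ l, LinearIndependent (F l) (ψ l ∘ v) := by
  induction n, hkn using Nat.le_induction with
  | base => exact ⟨v₀, rfl, hv₀⟩
  | succ n hkn ih =>
    obtain ⟨v, rfl, hv⟩ := ih fun l => (hn l).trans' n.le_succ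
    obtain ⟨u, hu⟩ := exists_forall_linearIndependent_comp_snoc ψ hcard hψ hn hv
    refine ⟨Fin.snoc v u, funext fun i => ?_, hu⟩
    exact Fin.snoc_castSucc (α := fun _ => V) u v (Fin.castLE hkn i)

end SimultaneousExtension

theorem Matrix.exists_isUnit_submatrix_map_mul {K ν : Type*} [Field K] [Fintype ν] [Nonempty ν]
    {F : ν → Type*} [∀ l, Field (F l)] [∀ l, Algebra K (F l)]
    (hcard : Fintype.card ν < ENat.card K) {s m : ℕ} (hms : m ≤ s)
    (D : ∀ l, Matrix (Fin s) (Fin m) (F l))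
    (hD : ∀ l, ∃ L : Matrix (Fin m) (Fin s) (F l), L * D l = 1) :
    ∃ B : Matrix (Fin s) (Fin s) K, IsUnit B ∧
      ∀ l, IsUnit ((B.map (algebraMap K (F l)) * D l).submatrix (Fin.castLE hms) id) := by
  let ψ : ∀ l, (Fin s → K) →ₗ[K] (Fin m → F l) := fun l =>
    (D l).vecMulLinear.restrictScalars K ∘ₗ (Algebra.linearMap K (F l)).compLeft (Fin s)
  have hψ : ∀ l, span (F l) (range (ψ l)) = ⊤ := by
    intro l
    rw [eq_top_iff, ← (LinearMap.range_eq_top (f := (D l).vecMulLinear)).2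
      (vecMul_surjective_iff_exists_left_inverse.2 (hD l)),
      range_vecMulLinear, span_le]
    rintro _ ⟨c, rfl⟩
    refine subset_span ⟨Pi.single c 1, ?_⟩
    ext j
    simp [ψ, vecMul, dotProduct, Pi.single_apply]
  obtain ⟨v, -, hv⟩ := exists_forall_linearIndependent_comp_extension ψ hcard hψ (Nat.zero_le m)
    (fun l => by rw [finrank_fin_fun]) (v₀ := Fin.elim0) (fun l => linearIndependent_empty_type)
  have hvK : LinearIndependent K v :=
    ((hv (Classical.arbitrary ν)).restrict_scalars' K).of_comp
  -- With a single component and `ψ = id`, the same lemma extends `v` to a basis of `K^s`.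
  obtain ⟨w, hwv, hw⟩ := exists_forall_linearIndependent_comp_extension (ν := Unit) (K := K)
    (F := fun _ => K) (fun _ => LinearMap.id) (by simp) (fun _ => by simp) hms
    (fun _ => by rw [finrank_fin_fun]) (fun _ => hvK)
  refine ⟨Matrix.of w, linearIndependent_rows_iff_isUnit.1 (hw ()), fun l => ?_⟩
  refine linearIndependent_rows_iff_isUnit.1 ?_
  have hrow : ((Matrix.of w).map (algebraMap K (F l)) * D l).submatrix (Fin.castLE hms) id
      = Matrix.of (ψ l ∘ v) := by
    ext i j
    simp [ψ, ← hwv, mul_apply, vecMul, dotProduct]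
  rw [hrow]
  exact hv l

theorem Matrix.exists_mul_submatrix_eq_one_of_isUnit {R n p : Type*} [CommRing R] [Fintype n]
    [DecidableEq n] [DecidableEq p] {A : Matrix n n R} (hA : IsUnit A) {f : p → n}
    (hf : Function.Injective f) : ∃ L : Matrix p n R, L * A.submatrix id f = 1 :=
  ⟨A⁻¹.submatrix f id, by
    rw [← submatrix_mul _ _ _ _ _ Function.bijective_id,
      nonsing_inv_mul _ ((isUnit_iff_isUnit_det A).1 hA), submatrix_one f hf]⟩

theorem Matrix.isUnit_iff_forall_isUnit_map_evalRingHom {ι n : Type*} [Fintype n] [DecidableEq n]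
    {R : ι → Type*} [∀ i, CommRing (R i)] (M : Matrix n n (∀ i, R i)) :
    IsUnit M ↔ ∀ i, IsUnit (M.map (Pi.evalRingHom R i)) := by
  simp only [isUnit_iff_isUnit_det M, Pi.isUnit_iff, isUnit_iff_isUnit_det]
  exact forall_congr' fun i => Iff.of_eq (congrArg IsUnit ((Pi.evalRingHom R i).map_det M))

theorem stmt16 (d' : ℕ) [NeZero d'] (Λl : ZMod d' → Type) [∀ l, Field (Λl l)]
    (E : Type) [Field E] (ι : E →+* (∀ l, Λl l))
    (hcard : (d' : Cardinal) < Cardinal.mk E)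
    (s m : ℕ) (hms : m ≤ s)
    (D : Matrix (Fin s) (Fin m) (∀ l, Λl l))
    (hD : ∃ D₀ : Matrix (Fin s) (Fin s) (∀ l, Λl l), IsUnit D₀ ∧
      ∀ (i : Fin s) (j : Fin m),
        D₀ i (Fin.cast (by omega) (Fin.natAdd (s - m) j)) = D i j) :
    ∃ A : Matrix (Fin m) (Fin m) (∀ l, Λl l), IsUnit A ∧
      ∃ B : Matrix (Fin s) (Fin s) E, IsUnit B ∧
        ∀ (i j : Fin m),
          ((B.map ι) * D * A) (Fin.castLE hms i) j = if i = j then 1 else 0 := by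
  obtain ⟨D₀, hD₀, hD₀D⟩ := hD
  obtain ⟨L, hL⟩ := D₀.exists_mul_submatrix_eq_one_of_isUnit hD₀
    (f := fun j : Fin m => Fin.cast (by omega) (Fin.natAdd (s - m) j))
    (fun _ _ h => by simpa using h)
  rw [show D₀.submatrix id _ = D from Matrix.ext hD₀D] at hL
  let : ∀ l, Algebra E (Λl l) := fun l => ((Pi.evalRingHom Λl l).comp ι).toAlgebra
  obtain ⟨B, hB, hBD⟩ := Matrix.exists_isUnit_submatrix_map_mul (F := Λl) (K := E)
    (by simpa [ENat.card] using hcard) hms (fun l => D.map (Pi.evalRingHom Λl l))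
    fun l => ⟨L.map (Pi.evalRingHom Λl l), by simp [← Matrix.map_mul, hL]⟩
  set M := (B.map ι * D).submatrix (Fin.castLE hms) id
  have hM : IsUnit M := M.isUnit_iff_forall_isUnit_map_evalRingHom.2 fun l => by
    convert hBD l using 1
    ext i j
    simp [M, Matrix.mul_apply]
    rfl
  refine ⟨M⁻¹, (Matrix.isUnit_nonsing_inv_iff).2 hM, B, hB, fun i j => ?_⟩
  change (M * M⁻¹) i j = _
  rw [Matrix.mul_nonsing_inv _ ((Matrix.isUnit_iff_isUnit_det M).1 hM), Matrix.one_apply]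
end

section
/- Let K = 𝔽_q(θ), v ∈ 𝔽_q[t] monic irreducible of degree d, K_v(θ) the completion of K at v(θ). Let Φ ∈ K[t] be a polynomial with Φ ∈ (K(t)_v)^× and Φ = c(t−θ)^s for some c ∈ K^× and s ∈ ℕ, and let ψ ∈ K^sep[t]_v satisfy the Frobenius equation σ(ψ) = Φ·ψ, where σ is the partial Frobenius Σa_i t^i ↦ Σ a_i^q t^i. Suppose ψ(θ) (obtained by substituting θ for t componentwise in ∏_l K^sep[[t−λ_l]], via fixed embeddings into the completions) converges and equals 0. Then ψ = 0. -/
open Polynomial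

/-!
STATEMENT 17 (rank-one v-adic ABP criterion): Let K = 𝔽_q(θ), v ∈ 𝔽_q[t] monic
irreducible of degree d, with v = ∏_{l ∈ ℤ/d} (t − λ_l) over 𝔽_{q^d} ⊆ K^sep, where
λ_l^q = λ_{l+1}.  Let Φ ∈ K[t] with Φ = c(t−θ)^s for some c ∈ K^× and s ∈ ℕ, and let
ψ = (Σ_i a_{l,i}(t−λ_l)^i)_l ∈ K^sep[t]_v ≅ ∏_l K^sep[[t−λ_l]] satisfy σ(ψ) = Φ·ψ,
where σ is the partial Frobenius Σ a_i t^i ↦ Σ a_i^q t^i, i.e.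
a_{l−1,i}^q = Σ_{j≤i} (taylor expansion of Φ at λ_l)_j · a_{l,i−j}.  Suppose that for each
l the series ψ_l(θ) = Σ_i a_{l,i}(θ−λ_l)^i converges to 0 in the completion ℂ_l of an
algebraic closure of K·𝔽_{q^d} at the place (θ−λ_l) (via fixed embeddings).  Then ψ = 0.
-/

noncomputable section

variable (Fq : Type) [Field Fq] [Fintype Fq]

/-- `K = 𝔽_q(θ)`, the rational function field. -/
abbrev Krat := FractionRing (Polynomial Fq)

/-- `θ`, the image of the variable in `K = 𝔽_q(θ)`. -/
def theta : Krat Fq := algebraMap (Polynomial Fq) (Krat Fq) Polynomial.X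

/-!
Fix `l` and put `x = θ - λ_l ∈ ℂ_l` and `f(z) = Σ a_{l,i} zⁱ`, so that `f(x) = 0` and `f`
converges on `|z| ≤ |x| < 1`. Going once around the cycle `ℤ/d`, i.e. `n = νd` times, the
Frobenius equation gives `f^{(q^n)} = G_n · f` for the polynomial
`G_n = ∏_{j<n} (Φ expanded at λ_{l-j})^{(q^j)}`; since `λ_l^{q^{n-j}} = λ_{l-j}`, its `j`-th
factor at `x^{q^n}` is the `q^j`-th power of `c (θ^{q^{n-j}} - θ)^s ≠ 0`. Evaluating at `x^{q^n}`
gives `0 = f(x)^{q^n} = G_n(x^{q^n}) f(x^{q^n})`, so `f` vanishes at the points `x^{q^{νd}} → 0`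
and the ultrametric identity theorem forces `f = 0`.
-/

open Filter Topology NNReal
open scoped PowerSeries

namespace PowerSeries

section Evaluation

variable {R : Type*} [CommRing R] [TopologicalSpace R] [IsTopologicalRing R]

theorem hasSum_coeff_X_mul {f : R⟦X⟧} {z T : R} (hf : HasSum (fun i => coeff i f * z ^ i) T) :
    HasSum (fun i => coeff i (X * f) * z ^ i) (z * T) := by
  rw [← hasSum_nat_add_iff' 1]
  simpa [coeff_succ_X_mul, pow_succ', mul_left_comm] using hf.mul_left z

theorem hasSum_coeff_coe_mul (P : R[X]) {f : R⟦X⟧} {z T : R}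
    (hf : HasSum (fun i => coeff i f * z ^ i) T) :
    HasSum (fun i => coeff i ((P : R⟦X⟧) * f) * z ^ i) (P.eval z * T) := by
  induction P using Polynomial.induction_on with
  | C a => simpa [mul_assoc] using hf.mul_left a
  | add P Q hP hQ => simpa [add_mul] using hP.add hQ
  | monomial n a ih =>
    have hmul : ((Polynomial.C a * Polynomial.X ^ (n + 1) : R[X]) : R⟦X⟧) * f =
        X * (((Polynomial.C a * Polynomial.X ^ n : R[X]) : R⟦X⟧) * f) := by
      push_cast; ring
    rw [hmul]
    convert hasSum_coeff_X_mul ih using 1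
    simp only [eval_mul, eval_C, eval_pow, eval_X]
    ring

end Evaluation

theorem coeff_coe_mul_mk {R : Type*} [CommSemiring R] (P : R[X]) (b : ℕ → R) (i : ℕ) :
    coeff i ((P : R⟦X⟧) * mk b) = ∑ j ∈ Finset.range (i + 1), P.coeff j * b (i - j) := by
  rw [coeff_mul, Finset.Nat.sum_antidiagonal_eq_sum_range_succ
    (fun j l => coeff j (P : R⟦X⟧) * coeff l (mk b))]
  simp only [Polynomial.coeff_coe, coeff_mk]

theorem map_pow_eq_coe_prod_mul {ι R : Type*} [AddCommGroupWithOne ι] [CommRing R]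
    (φ : R →+* R) (F : ι → R⟦X⟧) (B : ι → R[X]) (h : ∀ l, (F (l - 1)).map φ = B l * F l)
    (L : ι) (m : ℕ) :
    (F (L - m)).map (φ ^ m) =
      ((∏ j ∈ Finset.range m, (B (L - j)).map (φ ^ j) : R[X]) : R⟦X⟧) * F L := by
  induction m with
  | zero => simp [RingHom.one_def]
  | succ m ih =>
    rw [Nat.cast_succ, ← sub_sub, pow_succ, RingHom.mul_def, map_comp, RingHom.comp_apply, h,
      map_mul, ih, Finset.prod_range_succ, Polynomial.coe_mul, Polynomial.polynomial_map_coe]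
    ring

end PowerSeries

theorem RingHom.pow_apply_eq_of_apply_eq_add_one {ι R : Type*} [AddMonoidWithOne ι] [Semiring R]
    {φ : R →+* R} {lam : ι → R} (hlam : ∀ l, φ (lam l) = lam (l + 1)) (l : ι) (m : ℕ) :
    (φ ^ m) (lam l) = lam (l + m) := by
  induction m with
  | zero => simp [RingHom.one_def]
  | succ m ih =>
    rw [pow_succ', RingHom.mul_def, RingHom.comp_apply, ih, hlam, Nat.cast_succ, add_assoc]

theorem Polynomial.X_pow_ne_X {R : Type*} [Semiring R] [Nontrivial R] {n : ℕ} (hn : n ≠ 1) :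
    (X : R[X]) ^ n ≠ X :=
  fun h => hn (by simpa using congrArg natDegree h)

section FrobeniusCycle

variable {R : Type*} [Field R] {d : ℕ} {lam : ZMod d → R} {θ c : R}

theorem Polynomial.eval_prod_map_taylor_ne_zero {φ : R →+* R}
    (hlam : ∀ l, φ (lam l) = lam (l + 1)) (hc : c ≠ 0) (s : ℕ)
    (hθ : ∀ m, 0 < m → (φ ^ m) θ ≠ θ) (L : ZMod d) {n : ℕ} (hn : (n : ZMod d) = 0) :
    (∏ j ∈ Finset.range n, (taylor (lam (L - j)) (C c * (X - C θ) ^ s)).map (φ ^ j)).eval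
      ((φ ^ n) (θ - lam L)) ≠ 0 := by
  rw [eval_prod, Finset.prod_ne_zero_iff]
  intro j hj
  have hjn : j < n := Finset.mem_range.mp hj
  have hsplit : (φ ^ n) (θ - lam L) = (φ ^ j) ((φ ^ (n - j)) (θ - lam L)) := by
    rw [← RingHom.comp_apply, ← RingHom.mul_def, ← pow_add, Nat.add_sub_cancel' hjn.le]
  have hcycle : L + ((n - j : ℕ) : ZMod d) = L - j := by
    rw [Nat.cast_sub hjn.le, hn, zero_sub, ← sub_eq_add_neg]
  rw [hsplit, eval_map, eval₂_at_apply, _root_.map_ne_zero, taylor_eval]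
  simp only [eval_mul, eval_C, eval_pow, eval_sub, eval_X, map_sub,
    RingHom.pow_apply_eq_of_apply_eq_add_one hlam, hcycle, sub_add_cancel]
  exact mul_ne_zero hc (pow_ne_zero _ (sub_ne_zero.mpr (hθ _ (by omega))))

theorem PowerSeries.frequently_map_iterateFrobenius_eq_mul {p : ℕ} [ExpChar R p] {k : ℕ}
    (hk : 0 < k) [NeZero d] (hlam : ∀ l, lam l ^ p ^ k = lam (l + 1)) (hc : c ≠ 0) (s : ℕ)
    (hθ : ∀ n, 0 < n → θ ^ p ^ n ≠ θ) (F : ZMod d → R⟦X⟧)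
    (hF : ∀ l, (F (l - 1)).map (iterateFrobenius R p k) =
      ((taylor (lam l) (Polynomial.C c * (Polynomial.X - Polynomial.C θ) ^ s) : R[X]) : R⟦X⟧) *
        F l)
    (L : ZMod d) :
    ∃ᶠ n in atTop, ∃ G : R[X],
      (F L).map (iterateFrobenius R p n) = (G : R⟦X⟧) * F L ∧
        G.eval ((θ - lam L) ^ p ^ n) ≠ 0 := by
  set φ := iterateFrobenius R p k
  have hφ : ∀ m, φ ^ m = iterateFrobenius R p (k * m) := fun m =>
    DFunLike.coe_injective (by rw [RingHom.coe_pow, coe_iterateFrobenius_mul])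
  have hφθ : ∀ m, 0 < m → (φ ^ m) θ ≠ θ := fun m hm => by
    simpa only [hφ, iterateFrobenius_def] using hθ _ (Nat.mul_pos hk hm)
  refine frequently_atTop.mpr fun N => ⟨k * (N * d), ?_, ?_⟩
  · exact (Nat.le_mul_of_pos_right N (NeZero.pos d)).trans (Nat.le_mul_of_pos_left _ hk)
  have hNd : ((N * d : ℕ) : ZMod d) = 0 := by simp
  have hG0 := Polynomial.eval_prod_map_taylor_ne_zero (φ := φ) hlam hc s hφθ L hNd
  rw [hφ, iterateFrobenius_def] at hG0
  refine ⟨_, ?_, hG0⟩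
  simpa [hφ, hNd] using map_pow_eq_coe_prod_mul φ F _ hF L (N * d)

end FrobeniusCycle

namespace Valued

variable {K : Type*} [Field K] [Valued K ℝ≥0]

theorem hasBasis_nhds_zero_lt :
    (𝓝 (0 : K)).HasBasis (fun ε : ℝ≥0 => 0 < ε) fun ε => {x | v x < ε} := by
  refine (hasBasis_nhds_zero K ℝ≥0).to_hasBasis (fun γ _ => ?_) fun ε hε => ?_
  · refine ⟨_, ?_, fun x hx => (Valuation.restrict_lt_iff_lt_embedding _).mpr hx⟩
    simpa using MonoidWithZeroHom.ValueGroup₀.embedding_strictMono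
      (f := MonoidWithZeroHom.ofClass (v : Valuation K ℝ≥0)) γ.zero_lt
  -- Either some `y ≠ 0` has `v y < 1` and its powers give small balls, or the valuation is
  -- trivial and the unit ball is already `{0}`.
  by_cases hsmall : ∃ y : K, y ≠ 0 ∧ v y < 1
  · obtain ⟨y, hy0, hy1⟩ := hsmall
    obtain ⟨n, hn⟩ :=
      ((tendsto_pow_atTop_nhds_zero_of_lt_one zero_le hy1).eventually_lt_const hε).exists
    refine ⟨Units.mk0 (v.restrict (y ^ n)) (by simp [hy0]), trivial, fun x hx => ?_⟩
    rw [Set.mem_ofPred_eq, Units.val_mk0, Valuation.restrict_lt_iff, map_pow] at hx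
    exact hx.trans hn
  · push Not at hsmall
    refine ⟨1, trivial, fun x hx => ?_⟩
    simp only [Set.mem_ofPred_eq, Units.val_one, Valuation.restrict_lt_one_iff] at hx ⊢
    by_cases hx0 : x = 0
    · simpa [hx0] using hε
    · exact absurd hx (hsmall x hx0).not_gt

theorem tendsto_zero_iff {ι : Type*} {l : Filter ι} {f : ι → K} :
    Tendsto f l (𝓝 0) ↔ Tendsto (fun i => v (f i)) l (𝓝 0) := by
  rw [hasBasis_nhds_zero_lt.tendsto_right_iff, ← bot_eq_zero', nhds_bot_basis.tendsto_right_iff]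
  rfl

instance : NonarchimedeanAddGroup K where
  is_nonarchimedean U hU := by
    obtain ⟨γ, hγ⟩ := mem_nhds_zero.mp hU
    exact ⟨⟨v.restrict.ltAddSubgroup γ, isOpen_ball K γ.1⟩, hγ⟩

theorem summable_mul_pow_of_le [CompleteSpace K] {a : ℕ → K} {x z : K}
    (ha : Tendsto (fun i => a i * x ^ i) atTop (𝓝 0)) (hz : v z ≤ v x) :
    Summable fun i => a i * z ^ i := by
  refine NonarchimedeanAddGroup.summable_of_tendsto_cofinite_zero ?_
  rw [Nat.cofinite_eq_atTop, tendsto_zero_iff]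
  refine tendsto_of_tendsto_of_tendsto_of_le_of_le tendsto_const_nhds (tendsto_zero_iff.mp ha)
    (fun i => zero_le) fun i => ?_
  simp only [map_mul, map_pow]
  gcongr

theorem tendsto_pow_nhdsNE_zero {ι : Type*} {l : Filter ι} {N : ι → ℕ} {x : K}
    (hx0 : x ≠ 0) (hx1 : v x < 1) (hN : Tendsto N l atTop) :
    Tendsto (fun i => x ^ N i) l (𝓝[≠] 0) := by
  refine tendsto_nhdsWithin_iff.mpr
    ⟨tendsto_zero_iff.mpr ?_, .of_forall fun i => pow_ne_zero _ hx0⟩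
  simpa only [map_pow, Function.comp_def] using
    (tendsto_pow_atTop_nhds_zero_of_lt_one zero_le hx1).comp hN

theorem v_eq_of_hasSum_of_lt {ι : Type*} {g : ι → K} {S : K} {i₀ : ι} (hS : HasSum g S)
    (hg : ∀ i ≠ i₀, v (g i) < v (g i₀)) : v S = v (g i₀) := by
  classical
  rcases eq_or_ne (v (g i₀)) 0 with h0 | h0
  · rw [hS.unique (hasSum_single i₀ fun i hi => by simpa [h0] using hg i hi)]
  have hpartial : ∀ s : Finset ι, i₀ ∈ s → v (∑ i ∈ s, g i) = v (g i₀) := fun s hs => by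
    rw [← Finset.add_sum_erase s g hs, Valuation.map_add_eq_of_lt_left]
    exact Valuation.map_sum_lt _ h0 fun i hi => hg i (Finset.ne_of_mem_erase hi)
  have htail : Tendsto (fun s : Finset ι => S - ∑ i ∈ s, g i) atTop (𝓝 0) := by
    simpa using (tendsto_const_nhds (x := S)).sub hS
  obtain ⟨s, hsmall, hs⟩ := ((hasBasis_nhds_zero_lt.tendsto_right_iff.mp htail _
    (pos_iff_ne_zero.mpr h0)).and (eventually_ge_atTop {i₀})).exists
  have hvs := hpartial s (by simpa using hs)
  rw [← sub_add_cancel S (∑ i ∈ s, g i), Valuation.map_add_eq_of_lt_right _ (by rwa [hvs]), hvs]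

theorem eq_zero_of_frequently_hasSum_zero {a : ℕ → K} {x : K} (hx : x ≠ 0)
    (ha : Tendsto (fun i => a i * x ^ i) atTop (𝓝 0))
    (hzeros : ∃ᶠ z in 𝓝[≠] 0, HasSum (fun i => a i * z ^ i) 0) : a = 0 := by
  classical
  by_contra hne
  have hex : ∃ i, a i ≠ 0 := Function.ne_iff.mp hne
  set i₀ := Nat.find hex
  have hai₀ : a i₀ ≠ 0 := Nat.find_spec hex
  obtain ⟨M, hM⟩ := (tendsto_zero_iff.mp ha).bddAbove_range
  have hM' : ∀ i, v (a i * x ^ i) ≤ M := fun i => hM ⟨i, rfl⟩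
  set V := v (a i₀ * x ^ i₀)
  have hV : 0 < V := by simp [V, pos_iff_ne_zero, hai₀, hx]
  have hVM : V ≤ M := hM' i₀
  have hM0 : 0 < M := hV.trans_le hVM
  have hvx : 0 < v x := by simpa [pos_iff_ne_zero] using hx
  -- a zero `z` with `|z| / |x| < V / M` makes the `i₀`-th term of `f(z)` dominant
  obtain ⟨z, ⟨hzε, hz0⟩, hz⟩ :=
    ((hasBasis_nhds_zero_lt.inf_principal _).frequently_iff.mp hzeros)
      (v x * (V / M)) (mul_pos hvx (div_pos hV hM0))
  set t := v z / v x
  have ht0 : 0 < t := div_pos (by simpa [pos_iff_ne_zero] using hz0) hvx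
  have htV : t < V / M := (div_lt_iff₀' hvx).mpr hzε
  have ht1 : t ≤ 1 := htV.le.trans ((div_le_one hM0).mpr hVM)
  have hterm : ∀ i, v (a i * z ^ i) = v (a i * x ^ i) * t ^ i := fun i => by
    simp only [map_mul, map_pow, t, div_pow]
    field_simp
  have hdom : ∀ i ≠ i₀, v (a i * z ^ i) < v (a i₀ * z ^ i₀) := by
    intro i hi
    rw [hterm, hterm]
    rcases hi.lt_or_gt with hlt | hgt
    · rw [not_not.mp (Nat.find_min hex hlt), zero_mul, map_zero, zero_mul]
      exact mul_pos hV (pow_pos ht0 _)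
    calc v (a i * x ^ i) * t ^ i ≤ M * t ^ (i₀ + 1) :=
          mul_le_mul' (hM' i) (pow_le_pow_of_le_one zero_le ht1 hgt)
      _ = t * M * t ^ i₀ := by ring
      _ < V * t ^ i₀ := by gcongr; exact (lt_div_iff₀ hM0).mp htV
  exact (mul_pos hV (pow_pos ht0 i₀)).ne
    (by rw [← hterm, ← v_eq_of_hasSum_of_lt hz hdom, map_zero])

variable {R : Type*} [CompleteSpace K] {p : ℕ}

theorem hasSum_zero_of_map_iterateFrobenius_eq_mul [CommRing R] [ExpChar R p] [ExpChar K p]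
    (E : R →+* K) (n : ℕ) {f : R⟦X⟧} {G : R[X]}
    (hfG : f.map (iterateFrobenius R p n) = (G : R⟦X⟧) * f) {w : R} (hw : v (E w) ≤ 1)
    (hf : HasSum (fun i => E (PowerSeries.coeff i f) * E w ^ i) 0)
    (hG : E (G.eval (w ^ p ^ n)) ≠ 0) :
    HasSum (fun i => E (PowerSeries.coeff i f) * E (w ^ p ^ n) ^ i) 0 := by
  have hpn : p ^ n ≠ 0 := pow_ne_zero _ (expChar_pos K p).ne'
  obtain ⟨T, hT⟩ := summable_mul_pow_of_le (z := E (w ^ p ^ n)) hf.summable.tendsto_atTop_zero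
    (by simpa only [map_pow] using pow_le_of_le_one zero_le hw hpn)
  have hfrob : HasSum (fun i => (E (PowerSeries.coeff i f) * E w ^ i) ^ p ^ n) 0 := by
    simpa [zero_pow hpn, Function.comp_def, iterateFrobenius_def]
      using hf.map (iterateFrobenius K p n) (continuous_pow (p ^ n))
  have htwist : HasSum (fun i => PowerSeries.coeff i ((G.map E : K⟦X⟧) * f.map E) *
      E (w ^ p ^ n) ^ i) 0 := by
    simpa only [Polynomial.polynomial_map_coe, ← map_mul, ← hfG, PowerSeries.coeff_map,
      iterateFrobenius_def, map_pow, mul_pow, pow_right_comm] using hfrob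
  have hGT := (PowerSeries.hasSum_coeff_coe_mul (G.map E) (f := f.map E)
    (by simpa only [PowerSeries.coeff_map] using hT)).unique htwist
  rw [eval_map, eval₂_at_apply] at hGT
  rwa [(mul_eq_zero.mp hGT).resolve_left hG] at hT

theorem eq_zero_of_frequently_map_iterateFrobenius_eq_mul [Field R] [ExpChar R p] (hp : 1 < p)
    (E : R →+* K) {a : ℕ → R} {w : R} (hw0 : w ≠ 0) (hw1 : v (E w) < 1)
    (ha : HasSum (fun i => E (a i) * E w ^ i) 0)
    (htwist : ∃ᶠ n in atTop, ∃ G : R[X],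
      (PowerSeries.mk a).map (iterateFrobenius R p n) = (G : R⟦X⟧) * PowerSeries.mk a ∧
        G.eval (w ^ p ^ n) ≠ 0) :
    a = 0 := by
  have := expChar_of_injective_ringHom E.injective p
  have hEa : (fun i => E (a i)) = 0 := by
    refine eq_zero_of_frequently_hasSum_zero ((map_ne_zero E).mpr hw0)
      ha.summable.tendsto_atTop_zero ?_
    refine (tendsto_pow_nhdsNE_zero ((map_ne_zero E).mpr hw0) hw1
      (tendsto_pow_atTop_atTop_of_one_lt hp)).frequently (htwist.mono ?_)
    rintro n ⟨G, hG, hG0⟩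
    simpa using hasSum_zero_of_map_iterateFrobenius_eq_mul E n hG hw1.le (by simpa using ha)
      ((map_ne_zero E).mpr hG0)
  exact funext fun i => (map_eq_zero E).mp (congrFun hEa i)

end Valued

theorem stmt17
    (q : ℕ) (hq : q = Fintype.card Fq)
    (d : ℕ) [NeZero d]
    -- a separable closure K^sep of K
    (Ksep : Type) [Field Ksep] [Algebra (Krat Fq) Ksep]
    -- the roots λ_l of v in K^sep, with λ_l^q = λ_{l+1}
    (lam : ZMod d → Ksep)
    (hlam : ∀ l : ZMod d, lam l ^ q = lam (l + 1))
    -- Φ ∈ K[t] with Φ = c (t − θ)^s, c ∈ K^×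
    (Φ : Polynomial (Krat Fq)) (s : ℕ) (c : Krat Fq) (hc : c ≠ 0)
    (hΦ : Φ = Polynomial.C c * (Polynomial.X - Polynomial.C (theta Fq)) ^ s)
    -- ψ ∈ K^sep[t]_v = ∏_l K^sep[[t − λ_l]], given by coefficients a_{l,i} = ψ l i
    (ψ : ZMod d → ℕ → Ksep)
    -- the Frobenius equation σ(ψ) = Φ ψ, written out coefficientwise
    (hfrob : ∀ (l : ZMod d) (i : ℕ),
      (ψ (l - 1) i) ^ q =
        ∑ j ∈ Finset.range (i + 1),
          (Polynomial.taylor (lam l) (Φ.map (algebraMap (Krat Fq) Ksep))).coeff j *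
            ψ l (i - j))
    -- the completions ℂ_l: complete nonarchimedean valued fields with embeddings of K^sep
    (Cl : ZMod d → Type) [∀ l, Field (Cl l)] [∀ l, Valued (Cl l) NNReal]
    [∀ l, CompleteSpace (Cl l)]
    (e : ∀ l : ZMod d, Ksep →+* Cl l)
    -- θ − λ_l lies in the open unit disk of ℂ_l (the place (θ − λ_l))
    (hsmall : ∀ l : ZMod d,
      0 < Valued.v (e l (algebraMap (Krat Fq) Ksep (theta Fq)) - e l (lam l)) ∧
      Valued.v (e l (algebraMap (Krat Fq) Ksep (theta Fq)) - e l (lam l)) < 1)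
    -- ψ(θ) converges and equals 0
    (hzero : ∀ l : ZMod d,
      HasSum (fun i : ℕ =>
        e l (ψ l i) *
          (e l (algebraMap (Krat Fq) Ksep (theta Fq)) - e l (lam l)) ^ i) 0) :
    -- then ψ = 0
    ∀ (l : ZMod d) (i : ℕ), ψ l i = 0 := by
  set p := ringChar Fq
  obtain ⟨k, hp, hqk⟩ := FiniteField.card Fq p
  subst hq
  set ι := (algebraMap (Krat Fq) Ksep).comp (algebraMap Fq[X] (Krat Fq))
  have hι : Function.Injective ι :=
    (algebraMap (Krat Fq) Ksep).injective.comp (IsFractionRing.injective Fq[X] (Krat Fq))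
  have : ExpChar Fq p := .prime hp
  have : ExpChar Ksep p := expChar_of_injective_ringHom (f := ι.comp C) (hι.comp C_injective) p
  set θ := algebraMap (Krat Fq) Ksep (theta Fq)
  have hθ : ∀ n, 0 < n → θ ^ p ^ n ≠ θ := fun n hn h =>
    X_pow_ne_X (R := Fq) (n := p ^ n) (by simp [hp.ne_one, hn.ne'])
      (hι (by simpa [ι, θ, theta] using h))
  have hrec : ∀ l, (PowerSeries.mk (ψ (l - 1))).map (iterateFrobenius Ksep p k) =
      ((taylor (lam l) (C (algebraMap _ Ksep c) * (X - C θ) ^ s) : Ksep[X]) : Ksep⟦X⟧) *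
        PowerSeries.mk (ψ l) := fun l => PowerSeries.ext fun i => by
    rw [PowerSeries.coeff_map, PowerSeries.coeff_mk, iterateFrobenius_def, ← hqk, hfrob,
      PowerSeries.coeff_coe_mul_mk, hΦ]
    simp [θ]
  intro L
  refine congrFun (Valued.eq_zero_of_frequently_map_iterateFrobenius_eq_mul hp.one_lt (e L)
    (w := θ - lam L) ?_ (by simpa using (hsmall L).2) (by simpa using hzero L) ?_)
  · exact fun h => (hsmall L).1.ne' (by simp [← map_sub, h])
  exact PowerSeries.frequently_map_iterateFrobenius_eq_mul k.pos (lam := lam) (hqk ▸ hlam)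
    ((map_ne_zero (algebraMap (Krat Fq) Ksep)).mpr hc) s hθ (fun l => PowerSeries.mk (ψ l))
    hrec L
end
end
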